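/- arXiv:2408.15015 — 9 statements merged into one kernel-verified Lean document; each statement's English description precedes it below -/
import Mathlib

section
/- Let X be a nonempty finite set, p a probability vector on X with positive entries, d : X × X → [0,∞), s_D ≥ 0, s_P ≥ 0, and f : (0,∞) → ℝ convex and differentiable with f(1) = 0; set g(a,b) := f(a/b) − (a/b)·f'(a/b). Let q be a probability vector on X with positive entries. Suppose Q* is a stochastic matrix on X whose output marginal m(y) = Σ_x p(x)Q*(y|x) is positive for every y and which satisfies, with A(x,y) := exp(−s_D·d(x,y) − s_P·g(p(y), m(y))), the identity Q*(y|x) = q(y)A(x,y) / Σ_i q(i)A(x,i) for all x, y. Then Q* minimizes the functional L(Q) := Σ_{x,y} p(x)Q(y|x)·log(Q(y|x)/q(y)) + s_D·Σ_{x,y} p(x)Q(y|x)d(x,y) + s_P·D_f(p||Qm) over all stochastic matrices Q on X with positive output marginal Qm. -/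
namespace RDP

variable {X : Type*}

/-- Output marginal of a channel `Q` under input distribution `p`. -/
noncomputable def marg [Fintype X] (p : X → ℝ) (Q : X → X → ℝ) (y : X) : ℝ :=
  ∑ x, p x * Q x y

/-- Mutual information `I(p,Q) = Σ_{x,y} p(x)Q(y|x) log(Q(y|x)/Qm(y))`
(the convention `0 · log 0 = 0` holds since `Real.log 0 = 0`). -/
noncomputable def mutInfo [Fintype X] (p : X → ℝ) (Q : X → X → ℝ) : ℝ :=
  ∑ x, ∑ y, p x * Q x y * Real.log (Q x y / marg p Q y)

/-- Average distortion `Σ_{x,y} p(x)Q(y|x) d(x,y)`. -/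
noncomputable def distortion [Fintype X] (p : X → ℝ) (d : X → X → ℝ) (Q : X → X → ℝ) : ℝ :=
  ∑ x, ∑ y, p x * Q x y * d x y

/-- f-divergence `D_f(p‖q) = Σ_x q(x) f(p(x)/q(x))`. -/
noncomputable def fDiv [Fintype X] (f : ℝ → ℝ) (p q : X → ℝ) : ℝ :=
  ∑ x, q x * f (p x / q x)

/-- `Q` is a stochastic matrix: nonnegative entries with unit row sums. -/
def IsStochastic [Fintype X] (Q : X → X → ℝ) : Prop :=
  (∀ x y, 0 ≤ Q x y) ∧ ∀ x, ∑ y, Q x y = 1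

/-- The rate-distortion-perception function
`R(D,P) = inf { I(p,Q) : Q stochastic, positive output marginal, distortion ≤ D, D_f ≤ P }`,
with values in `EReal` so that the infimum of the empty set is `⊤`. -/
noncomputable def RDPF [Fintype X] (p : X → ℝ) (d : X → X → ℝ) (f : ℝ → ℝ)
    (D P : ℝ) : EReal :=
  sInf {r : EReal | ∃ Q : X → X → ℝ, IsStochastic Q ∧ (∀ y, 0 < marg p Q y) ∧
    distortion p d Q ≤ D ∧ fDiv f p (marg p Q) ≤ P ∧ r = (mutInfo p Q : EReal)}

/-- The Lagrangian `V(Q) = I(p,Q) + s_D · E[d] + s_P · D_f(p‖Qm)`. -/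
noncomputable def Vfun [Fintype X] (p : X → ℝ) (d : X → X → ℝ) (sD sP : ℝ) (f : ℝ → ℝ)
    (Q : X → X → ℝ) : ℝ :=
  mutInfo p Q + sD * distortion p d Q + sP * fDiv f p (marg p Q)

/-- `μ` is a (complex) eigenvalue of the matrix `M`. -/
def HasEig [Fintype X] (M : Matrix X X ℂ) (μ : ℂ) : Prop :=
  ∃ v : X → ℂ, v ≠ 0 ∧ M.mulVec v = μ • v

/-!
The map `m ↦ D_f(p‖m)` is convex with partial derivatives `g(p(y), m(y))`, so replacing it by its
tangent at the output marginal of `Q*` lowers the Lagrangian everywhere and leaves it unchanged at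
`Q*`. The linearized Lagrangian splits into rows `KL(Q(·|x)‖q) + E_{Q(·|x)}[c_x]` with
`c_x(y) = s_D d(x,y) + s_P g(p(y), m(y))`, and by the Gibbs variational principle each row is
minimized by the tilted distribution `q e^{-c_x} / Z_x`, which is `Q*(·|x)` by the fixed-point
equation.
-/

lemma _root_.ConvexOn.add_mul_sub_le_of_hasDerivAt {S : Set ℝ} {f : ℝ → ℝ} {x y f' : ℝ}
    (hfc : ConvexOn ℝ S f) (hx : x ∈ S) (hy : y ∈ S) (hf : HasDerivAt f f' x) :
    f x + f' * (y - x) ≤ f y := by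
  rcases lt_trichotomy x y with hxy | rfl | hxy
  · have h := hfc.le_slope_of_hasDerivAt hx hy hxy hf
    rw [slope_def_field, le_div_iff₀ (sub_pos.2 hxy)] at h
    linarith
  · simp
  · have h := hfc.slope_le_of_hasDerivAt hy hx hxy hf
    rw [slope_def_field, div_le_iff₀ (sub_pos.2 hxy)] at h
    linarith

/-- `∂/∂b [b f(a/b)]`, i.e. `g(a,b)`. -/
noncomputable def perspDeriv (f f' : ℝ → ℝ) (a b : ℝ) : ℝ :=
  f (a / b) - a / b * f' (a / b)

lemma mul_apply_div_add_sub_mul_perspDeriv_le {f f' : ℝ → ℝ}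
    (hfc : ConvexOn ℝ (Set.Ioi 0) f) (hf' : ∀ x ∈ Set.Ioi (0 : ℝ), HasDerivAt f (f' x) x)
    {a b c : ℝ} (ha : 0 < a) (hb : 0 < b) (hc : 0 < c) :
    b * f (a / b) + (c - b) * perspDeriv f f' a b ≤ c * f (a / c) := by
  have hab : (0 : ℝ) < a / b := by positivity
  have hac : (0 : ℝ) < a / c := by positivity
  have htangent := mul_le_mul_of_nonneg_left
    (hfc.add_mul_sub_le_of_hasDerivAt hab hac (hf' _ hab)) hc.le
  calc b * f (a / b) + (c - b) * perspDeriv f f' a b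
      = c * (f (a / b) + f' (a / b) * (a / c - a / b)) := by
        unfold perspDeriv; field_simp; ring
    _ ≤ c * f (a / c) := htangent

/-- The supporting hyperplane of the convex map `m ↦ D_f(p‖m)` at `m`. -/
lemma fDiv_sub_sum_mul_perspDeriv_le {X : Type*} [Fintype X] {f f' : ℝ → ℝ}
    (hfc : ConvexOn ℝ (Set.Ioi 0) f) (hf' : ∀ x ∈ Set.Ioi (0 : ℝ), HasDerivAt f (f' x) x)
    {p m m' : X → ℝ} (hp : ∀ x, 0 < p x) (hm : ∀ y, 0 < m y) (hm' : ∀ y, 0 < m' y) :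
    fDiv f p m - ∑ y, m y * perspDeriv f f' (p y) (m y)
      ≤ fDiv f p m' - ∑ y, m' y * perspDeriv f f' (p y) (m y) := by
  rw [fDiv, fDiv, ← Finset.sum_sub_distrib, ← Finset.sum_sub_distrib]
  refine Finset.sum_le_sum fun y _ => ?_
  have := mul_apply_div_add_sub_mul_perspDeriv_le hfc hf' (hp y) (hm y) (hm' y)
  linarith

lemma sub_le_mul_log_div {a b : ℝ} (ha : 0 ≤ a) (hb : 0 < b) :
    a - b ≤ a * Real.log (a / b) := by
  rcases ha.eq_or_lt with rfl | ha
  · simpa using hb.le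
  · have h := mul_le_mul_of_nonneg_left (Real.one_sub_inv_le_log_of_pos (div_pos ha hb)) ha.le
    rwa [inv_div, mul_sub, mul_one, mul_div_cancel₀ _ ha.ne'] at h

lemma sum_mul_log_div_nonneg {ι : Type*} [Fintype ι] {v w : ι → ℝ} (hv : ∀ i, 0 ≤ v i)
    (hw : ∀ i, 0 < w i) (hvw : ∑ i, v i = ∑ i, w i) :
    0 ≤ ∑ i, v i * Real.log (v i / w i) := by
  calc (0 : ℝ) = ∑ i, (v i - w i) := by rw [Finset.sum_sub_distrib, hvw, sub_self]
    _ ≤ _ := Finset.sum_le_sum fun i _ => sub_le_mul_log_div (hv i) (hw i)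

section GibbsVariational

variable {ι : Type*} [Fintype ι] {q c v w : ι → ℝ}

lemma sum_mul_log_div_add_eq (hq : ∀ i, 0 < q i) (hZ : 0 < ∑ j, q j * Real.exp (-c j))
    (hw : ∀ i, w i = q i * Real.exp (-c i) / ∑ j, q j * Real.exp (-c j)) (hv1 : ∑ i, v i = 1) :
    ∑ i, v i * (Real.log (v i / q i) + c i)
      = ∑ i, v i * Real.log (v i / w i) - Real.log (∑ j, q j * Real.exp (-c j)) := by
  set Z := ∑ j, q j * Real.exp (-c j)
  have hqe : ∀ i, 0 < q i * Real.exp (-c i) := fun i => mul_pos (hq i) (Real.exp_pos _)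
  have hterm : ∀ i, v i * (Real.log (v i / q i) + c i)
      = v i * Real.log (v i / w i) - v i * Real.log Z := by
    intro i
    rcases eq_or_ne (v i) 0 with hvi | hvi
    · simp [hvi]
    have hlogw : Real.log (w i) = Real.log (q i) - c i - Real.log Z := by
      rw [hw, Real.log_div (hqe i).ne' hZ.ne', Real.log_mul (hq i).ne' (Real.exp_pos _).ne',
        Real.log_exp]
      ring
    have hwi : w i ≠ 0 := by rw [hw]; exact div_ne_zero (hqe i).ne' hZ.ne'
    rw [Real.log_div hvi (hq i).ne', Real.log_div hvi hwi, hlogw]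
    ring
  rw [Finset.sum_congr rfl fun i _ => hterm i, Finset.sum_sub_distrib, ← Finset.sum_mul, hv1,
    one_mul]

theorem sum_mul_log_div_add_le_of_eq_tilted (hq : ∀ i, 0 < q i)
    (hw : ∀ i, w i = q i * Real.exp (-c i) / ∑ j, q j * Real.exp (-c j))
    (hv : ∀ i, 0 ≤ v i) (hv1 : ∑ i, v i = 1) :
    ∑ i, w i * (Real.log (w i / q i) + c i) ≤ ∑ i, v i * (Real.log (v i / q i) + c i) := by
  have hne : (Finset.univ : Finset ι).Nonempty :=
    Finset.nonempty_of_sum_ne_zero (hv1.symm ▸ one_ne_zero)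
  have hZ : 0 < ∑ j, q j * Real.exp (-c j) :=
    Finset.sum_pos (fun j _ => mul_pos (hq j) (Real.exp_pos _)) hne
  have hwpos : ∀ i, 0 < w i := fun i => by
    rw [hw]; exact div_pos (mul_pos (hq i) (Real.exp_pos _)) hZ
  have hw1 : ∑ i, w i = 1 := by
    simp_rw [hw, ← Finset.sum_div]
    exact div_self hZ.ne'
  have hself : ∑ i, w i * Real.log (w i / w i) = 0 := by
    simp [div_self (hwpos _).ne']
  rw [sum_mul_log_div_add_eq hq hZ hw hw1, sum_mul_log_div_add_eq hq hZ hw hv1, hself]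
  linarith [sum_mul_log_div_nonneg hv hwpos (hv1.trans hw1.symm)]

end GibbsVariational

section Lagrangian

variable {X : Type*} [Fintype X]

noncomputable def lagrangian (p q : X → ℝ) (d : X → X → ℝ) (sD sP : ℝ) (f : ℝ → ℝ)
    (Q : X → X → ℝ) : ℝ :=
  (∑ x, ∑ y, p x * Q x y * Real.log (Q x y / q y))
    + sD * distortion p d Q + sP * fDiv f p (marg p Q)

lemma sum_marg_mul (p : X → ℝ) (Q : X → X → ℝ) (g : X → ℝ) :
    ∑ y, marg p Q y * g y = ∑ x, ∑ y, p x * Q x y * g y := by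
  simp only [marg, Finset.sum_mul]
  exact Finset.sum_comm

lemma lagrangian_eq (p q : X → ℝ) (d : X → X → ℝ) (sD sP : ℝ) (f : ℝ → ℝ) (g : X → ℝ)
    (Q : X → X → ℝ) :
    lagrangian p q d sD sP f Q
      = ∑ x, p x * ∑ y, Q x y * (Real.log (Q x y / q y) + (sD * d x y + sP * g y))
        + sP * (fDiv f p (marg p Q) - ∑ y, marg p Q y * g y) := by
  have hlinear : ∑ x, p x * ∑ y, Q x y * (Real.log (Q x y / q y) + (sD * d x y + sP * g y))
      = (∑ x, ∑ y, p x * Q x y * Real.log (Q x y / q y))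
        + sD * distortion p d Q + sP * ∑ x, ∑ y, p x * Q x y * g y := by
    simp only [distortion, Finset.mul_sum, ← Finset.sum_add_distrib]
    exact Finset.sum_congr rfl fun x _ => Finset.sum_congr rfl fun y _ => by ring
  rw [lagrangian, hlinear, sum_marg_mul]
  ring

end Lagrangian

theorem fixed_point_minimizes_lagrangian_general [Fintype X]
    (p : X → ℝ) (hp : ∀ x, 0 < p x)
    (d : X → X → ℝ)
    (sD sP : ℝ) (hsP : 0 ≤ sP)
    (f f' : ℝ → ℝ) (hfconv : ConvexOn ℝ (Set.Ioi 0) f)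
    (hf' : ∀ x ∈ Set.Ioi (0 : ℝ), HasDerivAt f (f' x) x)
    (q : X → ℝ) (hq : ∀ y, 0 < q y)
    (Qs : X → X → ℝ)
    (hm : ∀ y, 0 < marg p Qs y)
    (A : X → X → ℝ)
    (hA : ∀ x y, A x y = Real.exp (-(sD * d x y) - sP *
        (f (p y / marg p Qs y) - p y / marg p Qs y * f' (p y / marg p Qs y))))
    (hfix : ∀ x y, Qs x y = q y * A x y / ∑ i, q i * A x i) :
    ∀ Q : X → X → ℝ, IsStochastic Q → (∀ y, 0 < marg p Q y) →
      (∑ x, ∑ y, p x * Qs x y * Real.log (Qs x y / q y))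
          + sD * distortion p d Qs + sP * fDiv f p (marg p Qs)
        ≤ (∑ x, ∑ y, p x * Q x y * Real.log (Q x y / q y))
          + sD * distortion p d Q + sP * fDiv f p (marg p Q) := by
  intro Q ⟨hQ0, hQ1⟩ hmQ
  set g := fun y => perspDeriv f f' (p y) (marg p Qs y)
  have hAc : ∀ x y, A x y = Real.exp (-(sD * d x y + sP * g y)) := fun x y => by
    rw [hA, neg_add, ← sub_eq_add_neg]; rfl
  have hrow : ∀ x, ∑ y, Qs x y * (Real.log (Qs x y / q y) + (sD * d x y + sP * g y))
      ≤ ∑ y, Q x y * (Real.log (Q x y / q y) + (sD * d x y + sP * g y)) := fun x =>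
    sum_mul_log_div_add_le_of_eq_tilted hq (fun y => by simp_rw [hfix, hAc]) (hQ0 x) (hQ1 x)
  show lagrangian p q d sD sP f Qs ≤ lagrangian p q d sD sP f Q
  rw [lagrangian_eq p q d sD sP f g, lagrangian_eq p q d sD sP f g]
  exact add_le_add (Finset.sum_le_sum fun x _ => mul_le_mul_of_nonneg_left (hrow x) (hp x).le)
    (mul_le_mul_of_nonneg_left (fDiv_sub_sum_mul_perspDeriv_le hfconv hf' hp hm hmQ) hsP)

/-- The parametric transition matrix `Q*(y|x) = q(y)A(x,y)/Σ_i q(i)A(x,i)` (with `A` built from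
its own output marginal) minimizes the Lagrangian
`L(Q) = D_KL(pQ‖p⊗q) + s_D·E[d] + s_P·D_f(p‖Qm)` over stochastic matrices with positive
output marginal. -/
theorem fixed_point_minimizes_lagrangian [Fintype X] [Nonempty X]
    (p : X → ℝ) (hp : ∀ x, 0 < p x) (hp1 : ∑ x, p x = 1)
    (d : X → X → ℝ) (hd : ∀ x y, 0 ≤ d x y)
    (sD sP : ℝ) (hsD : 0 ≤ sD) (hsP : 0 ≤ sP)
    (f f' : ℝ → ℝ) (hfconv : ConvexOn ℝ (Set.Ioi 0) f)
    (hf' : ∀ x ∈ Set.Ioi (0 : ℝ), HasDerivAt f (f' x) x) (hf1 : f 1 = 0)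
    (q : X → ℝ) (hq : ∀ y, 0 < q y) (hq1 : ∑ y, q y = 1)
    (Qs : X → X → ℝ) (hQs : IsStochastic Qs)
    (hm : ∀ y, 0 < marg p Qs y)
    (A : X → X → ℝ)
    (hA : ∀ x y, A x y = Real.exp (-(sD * d x y) - sP *
        (f (p y / marg p Qs y) - p y / marg p Qs y * f' (p y / marg p Qs y))))
    (hfix : ∀ x y, Qs x y = q y * A x y / ∑ i, q i * A x i) :
    ∀ Q : X → X → ℝ, IsStochastic Q → (∀ y, 0 < marg p Q y) →
      (∑ x, ∑ y, p x * Qs x y * Real.log (Qs x y / q y))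
          + sD * distortion p d Qs + sP * fDiv f p (marg p Qs)
        ≤ (∑ x, ∑ y, p x * Q x y * Real.log (Q x y / q y))
          + sD * distortion p d Q + sP * fDiv f p (marg p Q) :=
  fixed_point_minimizes_lagrangian_general p hp d sD sP hsP f f' hfconv hf' q hq Qs hm A hA hfix

end RDP
end

section
/- Let X be a nonempty finite set, p a probability vector on X with positive entries, d : X × X → [0,∞), s_D ≥ 0, s_P ≥ 0, and f : (0,∞) → ℝ convex and differentiable with f(1) = 0; set g(a,b) := f(a/b) − (a/b)·f'(a/b). Let (q^{(n)})_{n≥0} be a sequence of probability vectors on X with all entries positive satisfying, for every n and every y, q^{(n+1)}(y) = q^{(n)}(y)·Σ_x p(x)A_n(x,y)/(Σ_i q^{(n)}(i)A_n(x,i)), where A_n(x,y) := exp(−s_D·d(x,y) − s_P·g(p(y), q^{(n+1)}(y))); set Q^{(n+1)}(y|x) := q^{(n)}(y)A_n(x,y)/(Σ_i q^{(n)}(i)A_n(x,i)), whose output marginal is q^{(n+1)}. Assume there exists a probability vector q* on X with positive entries such that, with A*(x,y) := exp(−s_D·d(x,y) − s_P·g(p(y), q*(y))), one has Σ_x p(x)A*(x,y)/(Σ_i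 q*(i)A*(x,i)) = 1 for every y; set Q*(y|x) := q*(y)A*(x,y)/Σ_i q*(i)A*(x,i). Define V(Q) := I(p,Q) + s_D·Σ_{x,y} p(x)Q(y|x)d(x,y) + s_P·D_f(p||Qm). Then lim_{n→∞} V(Q^{(n)}) = V(Q*), and V(Q*) equals the infimum of V over all stochastic matrices on X with positive output marginal. -/
namespace RDP

variable {X : Type*}

/-!
Each OAM step returns the Gibbs channel `W(y|x) ∝ q(y) exp(-c(x,y))` for the cost
`c = s_D d + s_P g(p, q')`, in which the perception term is linearized at the new marginal `q'`.
Comparing `W` with an arbitrary channel `Q` of output marginal `m` gives the three-point inequality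
`V(W) + D(q'‖q) + D(m‖q') ≤ V(Q) + D(m‖q)`: the log-partition terms of both sides coincide, the
tangent inequality of the convex `f` bounds `D_f(p‖m)` below by its linearization at `q'`, and the
log-sum inequality bounds the row-wise divergence of `Q` from `W` below by `D(m‖q')`.
With `q = q' = q*` it shows that `Q*` minimizes `V`. Along the iteration, with `Q = Q*`, the gaps
`V(Q^{(n+1)}) - V(Q*) ≥ 0` are dominated by the decrements of `D(q*‖q^{(n)}) ≥ 0`, so they are
summable and tend to `0`.
-/

open Real Finset Filter Topology

lemma add_deriv_mul_sub_le_of_convexOn {S : Set ℝ} {f : ℝ → ℝ} {f' x y : ℝ}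
    (hf : ConvexOn ℝ S f) (hx : x ∈ S) (hy : y ∈ S) (hf' : HasDerivAt f f' x) :
    f x + f' * (y - x) ≤ f y := by
  rcases lt_trichotomy x y with hxy | rfl | hxy
  · have h := hf.le_slope_of_hasDerivAt hx hy hxy hf'
    rw [slope_def_field, le_div_iff₀ (sub_pos.mpr hxy)] at h
    linarith
  · simp
  · have h := hf.slope_le_of_hasDerivAt hy hx hxy hf'
    rw [slope_def_field, div_le_iff₀ (sub_pos.mpr hxy)] at h
    linarith

lemma sum_mul_log_div_le {ι : Type*} (s : Finset ι) {a b : ι → ℝ}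
    (ha : ∀ i ∈ s, 0 ≤ a i) (hb : ∀ i ∈ s, 0 < b i) :
    (∑ i ∈ s, a i) * log ((∑ i ∈ s, a i) / ∑ i ∈ s, b i) ≤ ∑ i ∈ s, a i * log (a i / b i) := by
  rcases s.eq_empty_or_nonempty with rfl | hs
  · simp
  set B := ∑ i ∈ s, b i
  have hB : 0 < B := sum_pos hb hs
  have hJensen := convexOn_mul_log.map_sum_le (t := s) (w := fun i => b i / B)
    (p := fun i => a i / b i) (fun i hi => (div_pos (hb i hi) hB).le)
    (by rw [← sum_div, div_self hB.ne']) (fun i hi => div_nonneg (ha i hi) (hb i hi).le)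
  have hw : ∀ i ∈ s, b i / B * (a i / b i) = a i / B := fun i hi => by
    field_simp [(hb i hi).ne']
  have hw' : ∀ i ∈ s, b i / B * (a i / b i * log (a i / b i)) = a i * log (a i / b i) / B :=
    fun i hi => by rw [← mul_assoc, hw i hi, div_mul_eq_mul_div]
  simp only [smul_eq_mul, sum_congr rfl hw, sum_congr rfl hw', ← sum_div] at hJensen
  rwa [div_mul_eq_mul_div, div_le_div_iff_of_pos_right hB] at hJensen

lemma tendsto_of_add_succ_le {u Φ : ℕ → ℝ} {l : ℝ} (hl : ∀ n, l ≤ u (n + 1))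
    (hΦ : ∀ n, 0 ≤ Φ n) (h : ∀ n, u (n + 1) + Φ (n + 1) ≤ l + Φ n) :
    Tendsto u atTop (𝓝 l) := by
  have hpartial : ∀ n, ∑ i ∈ range n, (u (i + 1) - l) + Φ n ≤ Φ 0 := by
    intro n
    induction n with
    | zero => simp
    | succ n ih => rw [sum_range_succ]; linarith [h n]
  have hsum : Summable fun n => u (n + 1) - l :=
    summable_of_sum_range_le (fun n => sub_nonneg.2 (hl n))
      fun n => by linarith [hpartial n, hΦ n]
  refine (tendsto_add_atTop_iff_nat 1).mp ?_
  simpa using hsum.tendsto_atTop_zero.add_const l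

-- The paper's `g(a, b)` is `tangentIntercept f f' (a / b)`, the value at `0` of the tangent
-- line of `f` at `a / b`.
noncomputable def tangentIntercept (f f' : ℝ → ℝ) (r : ℝ) : ℝ :=
  f r - r * f' r

noncomputable def oamCost (p : X → ℝ) (d : X → X → ℝ) (sD sP : ℝ) (f f' : ℝ → ℝ) (q : X → ℝ) :
    X → X → ℝ :=
  fun x y => sD * d x y + sP * tangentIntercept f f' (p y / q y)

lemma exp_neg_oamCost (p : X → ℝ) (d : X → X → ℝ) (sD sP : ℝ) (f f' : ℝ → ℝ) (q : X → ℝ)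
    (x y : X) : exp (-oamCost p d sD sP f f' q x y) =
      exp (-(sD * d x y) - sP * (f (p y / q y) - p y / q y * f' (p y / q y))) := by
  simp only [oamCost, tangentIntercept, neg_add']

section Channel

variable [Fintype X]

noncomputable def klDiv (u v : X → ℝ) : ℝ :=
  ∑ y, u y * log (u y / v y)

lemma klDiv_nonneg {u v : X → ℝ} (hu : ∀ y, 0 ≤ u y) (hv : ∀ y, 0 < v y)
    (hu1 : ∑ y, u y = 1) (hv1 : ∑ y, v y = 1) : 0 ≤ klDiv u v := by
  have h := sum_mul_log_div_le univ (fun y _ => hu y) (fun y _ => hv y)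
  rwa [hu1, hv1, div_one, log_one, mul_zero] at h

lemma klDiv_self {u : X → ℝ} (hu : ∀ y, 0 < u y) : klDiv u u = 0 :=
  sum_eq_zero fun y _ => by rw [div_self (hu y).ne', log_one, mul_zero]

lemma sum_sum_mul_eq_sum_marg_mul (p : X → ℝ) (Q : X → X → ℝ) (c : X → ℝ) :
    ∑ x, ∑ y, p x * Q x y * c y = ∑ y, marg p Q y * c y := by
  rw [sum_comm]
  exact sum_congr rfl fun y _ => by rw [marg, sum_mul]

lemma IsStochastic.sum_sum_mul_eq {Q : X → X → ℝ} (hQ : IsStochastic Q) (p c : X → ℝ) :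
    ∑ x, ∑ y, p x * Q x y * c x = ∑ x, p x * c x :=
  sum_congr rfl fun x _ => by
    rw [sum_congr rfl fun y _ => mul_right_comm (p x) (Q x y) (c x), ← mul_sum, hQ.2 x, mul_one]

lemma klDiv_marg_le {p : X → ℝ} (hp : ∀ x, 0 < p x) {Q W : X → X → ℝ} (hQ : ∀ x y, 0 ≤ Q x y)
    (hW : ∀ x y, 0 < W x y) :
    klDiv (marg p Q) (marg p W) ≤ ∑ x, ∑ y, p x * Q x y * log (Q x y / W x y) := by
  rw [sum_comm]
  refine sum_le_sum fun y _ => ?_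
  have h := sum_mul_log_div_le univ (a := fun x => p x * Q x y) (b := fun x => p x * W x y)
    (fun x _ => mul_nonneg (hp x).le (hQ x y)) (fun x _ => mul_pos (hp x) (hW x y))
  simpa only [marg, mul_div_mul_left _ _ (hp _).ne'] using h

noncomputable def gibbs (q : X → ℝ) (c : X → X → ℝ) : X → X → ℝ :=
  fun x y => q y * exp (-c x y) / ∑ i, q i * exp (-c x i)

lemma gibbs_partition_pos {q : X → ℝ} (hq : ∀ y, 0 < q y) (c : X → X → ℝ) (x : X) :
    0 < ∑ i, q i * exp (-c x i) :=
  sum_pos (fun i _ => mul_pos (hq i) (exp_pos _)) ⟨x, mem_univ x⟩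

lemma gibbs_pos {q : X → ℝ} (hq : ∀ y, 0 < q y) (c : X → X → ℝ) (x y : X) :
    0 < gibbs q c x y :=
  div_pos (mul_pos (hq y) (exp_pos _)) (gibbs_partition_pos hq c x)

lemma isStochastic_gibbs {q : X → ℝ} (hq : ∀ y, 0 < q y) (c : X → X → ℝ) :
    IsStochastic (gibbs q c) :=
  ⟨fun x y => (gibbs_pos hq c x y).le, fun x => by
    simp only [gibbs]
    rw [← sum_div, div_self (gibbs_partition_pos hq c x).ne']⟩

lemma log_gibbs {q : X → ℝ} (hq : ∀ y, 0 < q y) (c : X → X → ℝ) (x y : X) :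
    log (gibbs q c x y) = log (q y) - c x y - log (∑ i, q i * exp (-c x i)) := by
  rw [gibbs, log_div (mul_pos (hq y) (exp_pos _)).ne' (gibbs_partition_pos hq c x).ne',
    log_mul (hq y).ne' (exp_pos _).ne', log_exp]
  ring

lemma sum_sum_mul_log_div_gibbs {q : X → ℝ} (hq : ∀ y, 0 < q y) (c : X → X → ℝ) {p : X → ℝ}
    {Q : X → X → ℝ} (hQ : IsStochastic Q) (hQm : ∀ y, 0 < marg p Q y) :
    ∑ x, ∑ y, p x * Q x y * log (Q x y / gibbs q c x y) =
      mutInfo p Q + klDiv (marg p Q) q + ∑ x, ∑ y, p x * Q x y * c x y +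
        ∑ x, p x * log (∑ i, q i * exp (-c x i)) := by
  have hterm : ∀ x y, p x * Q x y * log (Q x y / gibbs q c x y) =
      p x * Q x y * log (Q x y / marg p Q y) + p x * Q x y * log (marg p Q y / q y) +
        p x * Q x y * c x y + p x * Q x y * log (∑ i, q i * exp (-c x i)) := by
    intro x y
    rcases (hQ.1 x y).eq_or_lt with h0 | h0
    · simp [← h0]
    rw [log_div h0.ne' (gibbs_pos hq c x y).ne', log_gibbs hq, log_div h0.ne' (hQm y).ne',
      log_div (hQm y).ne' (hq y).ne']
    ring
  have hkl := sum_sum_mul_eq_sum_marg_mul p Q fun y => log (marg p Q y / q y)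
  have hZ := hQ.sum_sum_mul_eq p fun x => log (∑ i, q i * exp (-c x i))
  simp only [hterm, sum_add_distrib, hkl, hZ]
  rfl

lemma marg_gibbs (p q : X → ℝ) (c : X → X → ℝ) (y : X) :
    marg p (gibbs q c) y = q y * ∑ x, p x * exp (-c x y) / ∑ i, q i * exp (-c x i) := by
  rw [marg, mul_sum]
  exact sum_congr rfl fun x _ => by rw [gibbs]; ring

lemma sum_mul_tangentIntercept_add_le_fDiv {f f' : ℝ → ℝ} (hf : ConvexOn ℝ (Set.Ioi 0) f)
    (hf' : ∀ x ∈ Set.Ioi (0 : ℝ), HasDerivAt f (f' x) x) {p q m : X → ℝ} (hp : ∀ y, 0 < p y)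
    (hq : ∀ y, 0 < q y) (hm : ∀ y, 0 < m y) :
    ∑ y, m y * tangentIntercept f f' (p y / q y) + ∑ y, p y * f' (p y / q y) ≤ fDiv f p m := by
  rw [fDiv, ← sum_add_distrib]
  refine sum_le_sum fun y _ => ?_
  have hr : 0 < p y / q y := div_pos (hp y) (hq y)
  have h := add_deriv_mul_sub_le_of_convexOn hf hr (div_pos (hp y) (hm y)) (hf' _ hr)
  have hmp : m y * (p y / m y) = p y := mul_div_cancel₀ _ (hm y).ne'
  have hexpand : m y * (f (p y / q y) + f' (p y / q y) * (p y / m y - p y / q y)) =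
      m y * tangentIntercept f f' (p y / q y) + p y * f' (p y / q y) := by
    rw [tangentIntercept]
    linear_combination f' (p y / q y) * hmp
  linarith [mul_le_mul_of_nonneg_left h (hm y).le]

lemma sum_mul_tangentIntercept_add_eq_fDiv (f f' : ℝ → ℝ) {p q : X → ℝ} (hq : ∀ y, 0 < q y) :
    ∑ y, q y * tangentIntercept f f' (p y / q y) + ∑ y, p y * f' (p y / q y) = fDiv f p q := by
  rw [fDiv, ← sum_add_distrib]
  refine sum_congr rfl fun y _ => ?_
  have hqp : q y * (p y / q y) = p y := mul_div_cancel₀ _ (hq y).ne'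
  rw [tangentIntercept]
  linear_combination -f' (p y / q y) * hqp

lemma sum_sum_mul_oamCost (p : X → ℝ) (d : X → X → ℝ) (sD sP : ℝ) (f f' : ℝ → ℝ)
    (q : X → ℝ) (Q : X → X → ℝ) :
    ∑ x, ∑ y, p x * Q x y * oamCost p d sD sP f f' q x y =
      sD * distortion p d Q + sP * ∑ y, marg p Q y * tangentIntercept f f' (p y / q y) := by
  have h := sum_sum_mul_eq_sum_marg_mul p Q fun y => tangentIntercept f f' (p y / q y)
  simp only [oamCost, mul_add, sum_add_distrib, distortion, mul_sum, ← h]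
  congr 1 <;> exact sum_congr rfl fun x _ => sum_congr rfl fun y _ => by ring

lemma Vfun_gibbs_add_klDiv_le {p : X → ℝ} (hp : ∀ x, 0 < p x) (d : X → X → ℝ) (sD : ℝ)
    {sP : ℝ} (hsP : 0 ≤ sP) {f f' : ℝ → ℝ} (hf : ConvexOn ℝ (Set.Ioi 0) f)
    (hf' : ∀ x ∈ Set.Ioi (0 : ℝ), HasDerivAt f (f' x) x) {q q' : X → ℝ} (hq : ∀ y, 0 < q y)
    (hq' : ∀ y, 0 < q' y) (hmarg : marg p (gibbs q (oamCost p d sD sP f f' q')) = q')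
    {Q : X → X → ℝ} (hQ : IsStochastic Q) (hQm : ∀ y, 0 < marg p Q y) :
    Vfun p d sD sP f (gibbs q (oamCost p d sD sP f f' q')) + klDiv q' q + klDiv (marg p Q) q' ≤
      Vfun p d sD sP f Q + klDiv (marg p Q) q := by
  set c := oamCost p d sD sP f f' q'
  set W := gibbs q c
  have hW := isStochastic_gibbs hq c
  have hWm : ∀ y, 0 < marg p W y := fun y => by rw [hmarg]; exact hq' y
  have hQ_div := sum_sum_mul_log_div_gibbs hq c hQ hQm
  have hW_div := sum_sum_mul_log_div_gibbs hq c hW hWm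
  have hW_self : ∑ x, ∑ y, p x * W x y * log (W x y / W x y) = 0 := by
    refine sum_eq_zero fun x _ => sum_eq_zero fun y _ => ?_
    rw [div_self (gibbs_pos hq c x y).ne', log_one, mul_zero]
  have hdata := klDiv_marg_le hp hQ.1 (gibbs_pos hq c)
  have htQ := sum_mul_tangentIntercept_add_le_fDiv hf hf' hp hq' hQm
  have htW := sum_mul_tangentIntercept_add_eq_fDiv f f' (p := p) hq'
  -- `hW_div` is the same identity for `Q = W`, whose left side vanishes: subtracting it from
  -- `hQ_div` cancels the log-partition term.
  rw [sum_sum_mul_oamCost] at hQ_div hW_div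
  rw [hmarg] at hW_div hdata
  simp only [Vfun, hmarg]
  linarith [mul_le_mul_of_nonneg_left htQ hsP, congrArg (sP * ·) htW]

lemma Vfun_gibbs_le_of_marg_eq {p : X → ℝ} (hp : ∀ x, 0 < p x) (d : X → X → ℝ) (sD : ℝ)
    {sP : ℝ} (hsP : 0 ≤ sP) {f f' : ℝ → ℝ} (hf : ConvexOn ℝ (Set.Ioi 0) f)
    (hf' : ∀ x ∈ Set.Ioi (0 : ℝ), HasDerivAt f (f' x) x) {q : X → ℝ} (hq : ∀ y, 0 < q y)
    (hmarg : marg p (gibbs q (oamCost p d sD sP f f' q)) = q)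
    {Q : X → X → ℝ} (hQ : IsStochastic Q) (hQm : ∀ y, 0 < marg p Q y) :
    Vfun p d sD sP f (gibbs q (oamCost p d sD sP f f' q)) ≤ Vfun p d sD sP f Q := by
  have h := Vfun_gibbs_add_klDiv_le hp d sD hsP hf hf' hq hq hmarg hQ hQm
  rw [klDiv_self hq] at h
  linarith

end Channel

theorem OAM_convergence_general [Fintype X]
    (p : X → ℝ) (hp : ∀ x, 0 < p x)
    (d : X → X → ℝ)
    (sD sP : ℝ) (hsP : 0 ≤ sP)
    (f f' : ℝ → ℝ) (hfconv : ConvexOn ℝ (Set.Ioi 0) f)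
    (hf' : ∀ x ∈ Set.Ioi (0 : ℝ), HasDerivAt f (f' x) x)
    (qseq : ℕ → X → ℝ) (hqpos : ∀ n y, 0 < qseq n y) (hqsum : ∀ n, ∑ y, qseq n y = 1)
    (A : ℕ → X → X → ℝ)
    (hA : ∀ n x y, A n x y = Real.exp (-(sD * d x y) - sP *
        (f (p y / qseq (n + 1) y) - p y / qseq (n + 1) y * f' (p y / qseq (n + 1) y))))
    (hiter : ∀ n y, qseq (n + 1) y =
        qseq n y * ∑ x, p x * A n x y / (∑ i, qseq n i * A n x i))
    (Qit : ℕ → X → X → ℝ)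
    (hQit : ∀ n x y, Qit (n + 1) x y = qseq n y * A n x y / ∑ i, qseq n i * A n x i)
    (qstar : X → ℝ) (hqs : ∀ y, 0 < qstar y) (hqs1 : ∑ y, qstar y = 1)
    (As : X → X → ℝ)
    (hAs : ∀ x y, As x y = Real.exp (-(sD * d x y) - sP *
        (f (p y / qstar y) - p y / qstar y * f' (p y / qstar y))))
    (hfix : ∀ y, ∑ x, p x * As x y / (∑ i, qstar i * As x i) = 1)
    (Qstar : X → X → ℝ)
    (hQstar : ∀ x y, Qstar x y = qstar y * As x y / ∑ i, qstar i * As x i)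
    :
    Filter.Tendsto (fun n => Vfun p d sD sP f (Qit n)) Filter.atTop
        (nhds (Vfun p d sD sP f Qstar))
    ∧ Vfun p d sD sP f Qstar =
        sInf {v : ℝ | ∃ Q : X → X → ℝ, IsStochastic Q ∧ (∀ y, 0 < marg p Q y) ∧
          v = Vfun p d sD sP f Q} := by
  set c := oamCost p d sD sP f f'
  have hQit' : ∀ n, Qit (n + 1) = gibbs (qseq n) (c (qseq (n + 1))) := fun n => by
    funext x y
    simp only [hQit, hA, gibbs, c, exp_neg_oamCost]
  have hQstar' : Qstar = gibbs qstar (c qstar) := by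
    funext x y
    simp only [hQstar, hAs, gibbs, c, exp_neg_oamCost]
  have hmargit : ∀ n, marg p (Qit (n + 1)) = qseq (n + 1) := fun n => funext fun y => by
    rw [hiter n y, hQit', marg_gibbs]
    simp only [hA, c, exp_neg_oamCost]
  have hmargstar : marg p Qstar = qstar := funext fun y => by
    have h := hfix y
    rw [hQstar', marg_gibbs]
    simp only [hAs, c, exp_neg_oamCost] at h ⊢
    rw [h, mul_one]
  have hstochstar : IsStochastic Qstar := hQstar' ▸ isStochastic_gibbs hqs _
  have hopt : ∀ Q, IsStochastic Q → (∀ y, 0 < marg p Q y) →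
      Vfun p d sD sP f Qstar ≤ Vfun p d sD sP f Q := fun Q hQ hQm =>
    hQstar' ▸ Vfun_gibbs_le_of_marg_eq hp d sD hsP hfconv hf' hqs (hQstar' ▸ hmargstar) hQ hQm
  refine ⟨tendsto_of_add_succ_le (Φ := fun n => klDiv qstar (qseq n))
    (fun n => hopt _ (hQit' n ▸ isStochastic_gibbs (hqpos n) _) (hmargit n ▸ hqpos (n + 1)))
    (fun n => klDiv_nonneg (fun y => (hqs y).le) (hqpos n) hqs1 (hqsum n)) fun n => ?_, ?_⟩
  · have h := Vfun_gibbs_add_klDiv_le hp d sD hsP hfconv hf' (hqpos n) (hqpos (n + 1))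
      (hQit' n ▸ hmargit n) hstochstar (hmargstar ▸ hqs)
    rw [← hQit' n, hmargstar] at h
    linarith [klDiv_nonneg (fun y => (hqpos (n + 1) y).le) (hqpos n) (hqsum (n + 1)) (hqsum n)]
  · symm
    refine IsLeast.csInf_eq ⟨⟨Qstar, hstochstar, hmargstar ▸ hqs, rfl⟩, ?_⟩
    rintro v ⟨Q, hQ, hQm, rfl⟩
    exact hopt Q hQ hQm

/-- Convergence of the Optimal Alternating Minimization iteration: the Lagrangian values
`V(Q^{(n)})` converge to `V(Q*)`, which is the infimum of `V` over stochastic matrices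
with positive output marginal. -/
theorem OAM_convergence [Fintype X] [Nonempty X]
    (p : X → ℝ) (hp : ∀ x, 0 < p x) (hp1 : ∑ x, p x = 1)
    (d : X → X → ℝ) (hd : ∀ x y, 0 ≤ d x y)
    (sD sP : ℝ) (hsD : 0 ≤ sD) (hsP : 0 ≤ sP)
    (f f' : ℝ → ℝ) (hfconv : ConvexOn ℝ (Set.Ioi 0) f)
    (hf' : ∀ x ∈ Set.Ioi (0 : ℝ), HasDerivAt f (f' x) x) (hf1 : f 1 = 0)
    (qseq : ℕ → X → ℝ) (hqpos : ∀ n y, 0 < qseq n y) (hqsum : ∀ n, ∑ y, qseq n y = 1)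
    (A : ℕ → X → X → ℝ)
    (hA : ∀ n x y, A n x y = Real.exp (-(sD * d x y) - sP *
        (f (p y / qseq (n + 1) y) - p y / qseq (n + 1) y * f' (p y / qseq (n + 1) y))))
    (hiter : ∀ n y, qseq (n + 1) y =
        qseq n y * ∑ x, p x * A n x y / (∑ i, qseq n i * A n x i))
    (Qit : ℕ → X → X → ℝ)
    (hQit : ∀ n x y, Qit (n + 1) x y = qseq n y * A n x y / ∑ i, qseq n i * A n x i)
    (qstar : X → ℝ) (hqs : ∀ y, 0 < qstar y) (hqs1 : ∑ y, qstar y = 1)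
    (As : X → X → ℝ)
    (hAs : ∀ x y, As x y = Real.exp (-(sD * d x y) - sP *
        (f (p y / qstar y) - p y / qstar y * f' (p y / qstar y))))
    (hfix : ∀ y, ∑ x, p x * As x y / (∑ i, qstar i * As x i) = 1)
    (Qstar : X → X → ℝ)
    (hQstar : ∀ x y, Qstar x y = qstar y * As x y / ∑ i, qstar i * As x i)
    :
    Filter.Tendsto (fun n => Vfun p d sD sP f (Qit n)) Filter.atTop
        (nhds (Vfun p d sD sP f Qstar))
    ∧ Vfun p d sD sP f Qstar =
        sInf {v : ℝ | ∃ Q : X → X → ℝ, IsStochastic Q ∧ (∀ y, 0 < marg p Q y) ∧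
          v = Vfun p d sD sP f Q} :=
  OAM_convergence_general p hp d sD sP hsP f f' hfconv hf' qseq hqpos hqsum A hA hiter Qit hQit
    qstar hqs hqs1 As hAs hfix Qstar hQstar

end RDP
end

section
/- Let X be a nonempty finite set, p a probability vector on X with positive entries, d : X × X → [0,∞), s_D ≥ 0, s_P ≥ 0, and let f : (0,∞) → ℝ be convex and twice continuously differentiable with f(1) = 0; set g(a,b) := f(a/b) − (a/b)·f'(a/b). Let q and u be probability vectors on X with positive entries and define A(x,y) := exp(−s_D·d(x,y) − s_P·g(p(y), u(y))), Z(x) := Σ_k q(k)A(x,k), c(i) := Σ_x p(x)A(x,i)/Z(x), M(i,j) := q(i)·Σ_x p(x)·A(x,i)A(x,j)/Z(x)², C := the diagonal matrix with entries c(i), and Γ := the diagonal matrix with entries s_P·q(i)·(p(i)²/u(i)³)·f''(p(i)/u(i)). Then every complex eigenvalue of the matrix J_T := I + (C − M)·Γ has real part at least 1; in particular J_T is invertible. -/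
/-!
Write `Γ = diag(q) · H` with `H = diag(s_P · p²/u³ · f''(p/u))`, which is `≥ 0` by convexity of
`f`. With the probability vectors `aₓ(i) = q(i) A(x,i) / Z(x)` one has
`(C − M) · diag(q) = Σₓ p(x) (diag aₓ − aₓ aₓᵀ)`, a positive semidefinite matrix `S`
(each summand is a covariance matrix). So `J_T = I + S H`. If `S H v = λ v` and `t = H v`, then
`tᴴ S t = λ Σᵢ Hᵢ |vᵢ|²`; the left side is `≥ 0`, so `Re λ ≥ 0` unless `t = 0`, in which case
`λ v = S t = 0` and `λ = 0`.
-/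

namespace RDP

variable {X : Type*}

open Matrix
open scoped ComplexOrder

theorem _root_.ConvexOn.nonneg_of_hasDerivAt2 {S : Set ℝ} {f f' : ℝ → ℝ} {x f'' : ℝ}
    (hS : IsOpen S) (hf : ConvexOn ℝ S f) (hf' : ∀ y ∈ S, HasDerivAt f (f' y) y) (hx : x ∈ S)
    (hf'' : HasDerivAt f' f'' x) : 0 ≤ f'' := by
  have hmono : MonotoneOn f' S := fun y hy z hz hyz => by
    rcases hyz.eq_or_lt with rfl | hyz
    · rfl
    exact (hf.le_slope_of_hasDerivAt hy hz hyz (hf' y hy)).trans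
      (hf.slope_le_of_hasDerivAt hy hz hyz (hf' z hz))
  exact hf''.hasDerivWithinAt.nonneg_of_monotoneOn (hS.preperfect x hx) hmono

section

variable [Fintype X] [DecidableEq X]

def covMatrix {R : Type*} [Ring R] (a : X → R) : Matrix X X R := diagonal a - vecMulVec a a

theorem dotProduct_map_covMatrix_mulVec {𝕜 : Type*} [RCLike 𝕜] (a : X → ℝ) (v : X → 𝕜) :
    star v ⬝ᵥ ((covMatrix a).map (algebraMap ℝ 𝕜) *ᵥ v)
      = ((∑ i, a i * ‖v i‖ ^ 2 - ‖∑ i, a i • v i‖ ^ 2 : ℝ) : 𝕜) := by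
  have hvec : (covMatrix a).map (algebraMap ℝ 𝕜) *ᵥ v
      = fun i => (a i : 𝕜) * v i - (a i : 𝕜) * ∑ j, a j • v j := by
    ext i
    simp [covMatrix, mulVec, dotProduct, sub_mul, diagonal_apply, vecMulVec_apply, Finset.mul_sum,
      RCLike.real_smul_eq_coe_mul, mul_assoc, apply_ite (algebraMap ℝ 𝕜)]
  rw [hvec]
  simp only [dotProduct, Pi.star_apply, RCLike.star_def, mul_sub, Finset.sum_sub_distrib]
  push_cast
  rw [← RCLike.conj_mul, map_sum]
  congr 1
  · refine Finset.sum_congr rfl fun i _ => ?_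
    rw [← RCLike.conj_mul]
    ring
  · rw [Finset.sum_mul]
    refine Finset.sum_congr rfl fun i _ => ?_
    simp only [RCLike.real_smul_eq_coe_mul, RCLike.conj_ofReal, map_mul]
    ring

theorem posSemidef_map_covMatrix {𝕜 : Type*} [RCLike 𝕜] {a : X → ℝ} (ha : ∀ i, 0 ≤ a i)
    (hsum : ∑ i, a i ≤ 1) : ((covMatrix a).map (algebraMap ℝ 𝕜)).PosSemidef := by
  refine .of_dotProduct_mulVec_nonneg ?_ fun v => ?_
  · ext i j
    by_cases h : i = j
    · subst h
      simp [covMatrix]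
    · simp [covMatrix, h, Ne.symm h, vecMulVec_apply, mul_comm]
  rw [dotProduct_map_covMatrix_mulVec, RCLike.ofReal_nonneg, sub_nonneg]
  have hw : ∀ i, 0 ≤ a i * ‖v i‖ ^ 2 := fun i => mul_nonneg (ha i) (sq_nonneg _)
  calc ‖∑ i, a i • v i‖ ^ 2 ≤ (∑ i, a i * ‖v i‖) ^ 2 := by
        gcongr
        refine (norm_sum_le _ _).trans_eq ?_
        simp [norm_smul, abs_of_nonneg (ha _)]
    _ ≤ (∑ i, a i) * ∑ i, a i * ‖v i‖ ^ 2 :=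
        Finset.sum_sq_le_sum_mul_sum_of_sq_le_mul _ (fun i _ => ha i) (fun i _ => hw i)
          fun i _ => le_of_eq (by ring)
    _ ≤ ∑ i, a i * ‖v i‖ ^ 2 :=
        mul_le_of_le_one_left (Finset.sum_nonneg fun i _ => hw i) hsum

theorem posSemidef_map_sum_smul {𝕜 : Type*} [RCLike 𝕜] {ι : Type*} (s : Finset ι) {w : ι → ℝ}
    {N : ι → Matrix X X ℝ} (hw : ∀ k, 0 ≤ w k) (hN : ∀ k, ((N k).map (algebraMap ℝ 𝕜)).PosSemidef) :
    ((∑ k ∈ s, w k • N k).map (algebraMap ℝ 𝕜)).PosSemidef := by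
  have hmap : ∀ N : Matrix X X ℝ, N.map (algebraMap ℝ 𝕜) = (Algebra.ofId ℝ 𝕜).mapMatrix N :=
    fun _ => rfl
  simp only [hmap, map_sum, map_smul] at hN ⊢
  exact posSemidef_sum s fun k _ => (hN k).smul (hw k)

theorem diagonal_sub_mul_diagonal_eq_sum_smul_covMatrix {p q c Z : X → ℝ} {A : X → X → ℝ}
    {M : Matrix X X ℝ} (hc : ∀ i, c i = ∑ x, p x * A x i / Z x)
    (hM : ∀ i j, M i j = q i * ∑ x, p x * (A x i * A x j) / Z x ^ 2) :
    (diagonal c - M) * diagonal q = ∑ x, p x • covMatrix fun i => q i * A x i / Z x := by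
  ext i j
  rw [mul_diagonal, Matrix.sub_apply, hM, Matrix.sum_apply, diagonal_apply]
  simp only [covMatrix, Matrix.smul_apply, Matrix.sub_apply, diagonal_apply, vecMulVec_apply,
    smul_eq_mul]
  split_ifs with hij
  · subst hij
    simp only [hc, Finset.sum_mul, Finset.mul_sum, ← Finset.sum_sub_distrib]
    refine Finset.sum_congr rfl fun x _ => ?_
    ring
  · simp only [Finset.sum_mul, Finset.mul_sum, zero_sub, ← Finset.sum_neg_distrib, neg_mul]
    refine Finset.sum_congr rfl fun x _ => ?_
    ring

theorem hasEig_one_add_iff {B : Matrix X X ℂ} {μ : ℂ} : HasEig (1 + B) μ ↔ HasEig B (μ - 1) := by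
  refine exists_congr fun v => and_congr_right fun _ => ?_
  rw [add_mulVec, one_mulVec, sub_smul, one_smul, eq_sub_iff_add_eq, add_comm]

theorem HasEig.re_nonneg_of_posSemidef_mul_diagonal {S : Matrix X X ℂ} (hS : S.PosSemidef)
    {h : X → ℝ} (hh : ∀ i, 0 ≤ h i) {μ : ℂ}
    (hμ : HasEig (S * diagonal fun i => (h i : ℂ)) μ) : 0 ≤ μ.re := by
  obtain ⟨v, hv0, hv⟩ := hμ
  set t : X → ℂ := fun i => (h i : ℂ) * v i
  have hSt : S *ᵥ t = μ • v := by
    rw [← hv, ← mulVec_mulVec]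
    exact congrArg _ (funext fun i => (mulVec_diagonal (fun i => (h i : ℂ)) v i).symm)
  have hw : ∀ i, 0 ≤ h i * ‖v i‖ ^ 2 := fun i => mul_nonneg (hh i) (sq_nonneg _)
  have hform : star t ⬝ᵥ (S *ᵥ t) = μ * ((∑ i, h i * ‖v i‖ ^ 2 : ℝ) : ℂ) := by
    rw [hSt, dotProduct_smul, smul_eq_mul]
    congr 1
    push_cast
    refine Finset.sum_congr rfl fun i _ => ?_
    simp only [t, Pi.star_apply, Complex.star_def, map_mul, Complex.conj_ofReal,
      ← Complex.conj_mul']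
    ring
  rcases (Finset.sum_nonneg fun i _ => hw i).eq_or_lt with hr | hr
  · have ht0 : t = 0 := funext fun i => by
      have := (Finset.sum_eq_zero_iff_of_nonneg fun i _ => hw i).mp hr.symm i (Finset.mem_univ i)
      rcases mul_eq_zero.mp this with hi | hi
      · simp [t, hi]
      · simp [t, norm_eq_zero.mp ((pow_eq_zero_iff two_ne_zero).mp hi)]
    have hμv : μ • v = 0 := by rw [← hSt, ht0, mulVec_zero]
    rw [(smul_eq_zero.mp hμv).resolve_right hv0, Complex.zero_re]
  · have hpos := hS.dotProduct_mulVec_nonneg t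
    rw [hform, Complex.nonneg_iff, Complex.re_mul_ofReal] at hpos
    exact (mul_nonneg_iff_of_pos_right hr).mp hpos.1

theorem HasEig.one_le_re_of_map_one_add_mul_diagonal {S : Matrix X X ℝ}
    (hS : (S.map (algebraMap ℝ ℂ)).PosSemidef) {h : X → ℝ} (hh : ∀ i, 0 ≤ h i) {μ : ℂ}
    (hμ : HasEig ((1 + S * diagonal h).map (fun x : ℝ => (x : ℂ))) μ) : 1 ≤ μ.re := by
  have hmap : (1 + S * diagonal h).map (fun x : ℝ => (x : ℂ))
      = 1 + S.map (algebraMap ℝ ℂ) * diagonal fun i => (h i : ℂ) := by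
    change (Algebra.ofId ℝ ℂ).mapMatrix (1 + S * diagonal h) = _
    rw [map_add, map_one, map_mul, AlgHom.mapMatrix_apply, AlgHom.mapMatrix_apply,
      diagonal_map (map_zero _)]
    rfl
  rw [hmap, hasEig_one_add_iff] at hμ
  simpa [Complex.sub_re] using hμ.re_nonneg_of_posSemidef_mul_diagonal hS hh

theorem isUnit_of_not_hasEig_zero {B : Matrix X X ℝ}
    (hB : ¬HasEig (B.map (fun x : ℝ => (x : ℂ))) 0) : IsUnit B := by
  rw [isUnit_iff_isUnit_det, isUnit_iff_ne_zero]
  intro hdet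
  have hdetC : (B.map (fun x : ℝ => (x : ℂ))).det = 0 := by
    have := RingHom.map_det Complex.ofRealHom B
    rw [hdet, map_zero] at this
    exact this.symm
  obtain ⟨v, hv0, hv⟩ := exists_mulVec_eq_zero_iff.mpr hdetC
  exact hB ⟨v, hv0, by rw [hv, zero_smul]⟩

end

theorem newton_jacobian_eigenvalues_general [Fintype X] [DecidableEq X]
    (p : X → ℝ) (hp : ∀ x, 0 < p x)
    (d : X → X → ℝ) (sD sP : ℝ) (hsP : 0 ≤ sP)
    (f f' f'' : ℝ → ℝ) (hfconv : ConvexOn ℝ (Set.Ioi 0) f)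
    (hf' : ∀ x ∈ Set.Ioi (0 : ℝ), HasDerivAt f (f' x) x)
    (hf'' : ∀ x ∈ Set.Ioi (0 : ℝ), HasDerivAt f' (f'' x) x)
    (q u : X → ℝ) (hq : ∀ i, 0 < q i) (hu : ∀ i, 0 < u i)
    (A : X → X → ℝ)
    (hA : ∀ x y, A x y = Real.exp (-(sD * d x y) - sP *
        (f (p y / u y) - p y / u y * f' (p y / u y))))
    (Z : X → ℝ) (hZ : ∀ x, Z x = ∑ k, q k * A x k)
    (c : X → ℝ) (hcdef : ∀ i, c i = ∑ x, p x * A x i / Z x)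
    (M : Matrix X X ℝ)
    (hM : ∀ i j, M i j = q i * ∑ x, p x * (A x i * A x j) / Z x ^ 2)
    (C Γ : Matrix X X ℝ) (hC : C = Matrix.diagonal c)
    (hΓ : Γ = Matrix.diagonal fun i => sP * (q i * (p i ^ 2 / u i ^ 3 * f'' (p i / u i)))) :
    (∀ μ : ℂ, HasEig ((1 + (C - M) * Γ).map (fun x : ℝ => (x : ℂ))) μ → 1 ≤ μ.re)
    ∧ IsUnit (1 + (C - M) * Γ) := by
  set h : X → ℝ := fun i => sP * (p i ^ 2 / u i ^ 3 * f'' (p i / u i))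
  set a : X → X → ℝ := fun x i => q i * A x i / Z x
  have hA0 : ∀ x y, 0 ≤ A x y := fun x y => (hA x y).symm ▸ (Real.exp_pos _).le
  have ha0 : ∀ x i, 0 ≤ a x i := fun x i => div_nonneg (mul_nonneg (hq i).le (hA0 x i))
    ((hZ x).symm ▸ Finset.sum_nonneg fun k _ => mul_nonneg (hq k).le (hA0 x k))
  have ha1 : ∀ x, ∑ i, a x i ≤ 1 := fun x => by
    simp only [a, ← Finset.sum_div, ← hZ]
    exact div_self_le_one _
  have hh : ∀ i, 0 ≤ h i := fun i => by
    have hpu : p i / u i ∈ Set.Ioi 0 := div_pos (hp i) (hu i)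
    exact mul_nonneg hsP (mul_nonneg (div_nonneg (sq_nonneg _) (pow_nonneg (hu i).le 3))
      (hfconv.nonneg_of_hasDerivAt2 isOpen_Ioi hf' hpu (hf'' _ hpu)))
  have hJ : (C - M) * Γ = (∑ x, p x • covMatrix (a x)) * diagonal h := by
    rw [← diagonal_sub_mul_diagonal_eq_sum_smul_covMatrix hcdef hM, hC, hΓ, mul_assoc,
      diagonal_mul_diagonal]
    congr
    funext i
    ring
  have hS : ((∑ x, p x • covMatrix (a x)).map (algebraMap ℝ ℂ)).PosSemidef :=
    posSemidef_map_sum_smul _ (fun x => (hp x).le) fun x => posSemidef_map_covMatrix (ha0 x) (ha1 x)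
  have heig : ∀ μ : ℂ, HasEig ((1 + (C - M) * Γ).map (fun x : ℝ => (x : ℂ))) μ → 1 ≤ μ.re :=
    fun μ hμ => (hJ ▸ hμ).one_le_re_of_map_one_add_mul_diagonal hS hh
  exact ⟨heig, isUnit_of_not_hasEig_zero fun h0 => absurd (heig 0 h0) (by norm_num)⟩

/-- The Jacobian `J_T = I + (C − M)·Γ` of the Newton root-finding functional has all of its
complex eigenvalues with real part at least `1`; in particular it is invertible. -/
theorem newton_jacobian_eigenvalues [Fintype X] [DecidableEq X] [Nonempty X]
    (p : X → ℝ) (hp : ∀ x, 0 < p x) (hp1 : ∑ x, p x = 1)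
    (d : X → X → ℝ) (hd : ∀ x y, 0 ≤ d x y)
    (sD sP : ℝ) (hsD : 0 ≤ sD) (hsP : 0 ≤ sP)
    (f f' f'' : ℝ → ℝ) (hfconv : ConvexOn ℝ (Set.Ioi 0) f) (hf1 : f 1 = 0)
    (hf' : ∀ x ∈ Set.Ioi (0 : ℝ), HasDerivAt f (f' x) x)
    (hf'' : ∀ x ∈ Set.Ioi (0 : ℝ), HasDerivAt f' (f'' x) x)
    (hf''c : ContinuousOn f'' (Set.Ioi 0))
    (q u : X → ℝ) (hq : ∀ i, 0 < q i) (hq1 : ∑ i, q i = 1)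
    (hu : ∀ i, 0 < u i) (hu1 : ∑ i, u i = 1)
    (A : X → X → ℝ)
    (hA : ∀ x y, A x y = Real.exp (-(sD * d x y) - sP *
        (f (p y / u y) - p y / u y * f' (p y / u y))))
    (Z : X → ℝ) (hZ : ∀ x, Z x = ∑ k, q k * A x k)
    (c : X → ℝ) (hcdef : ∀ i, c i = ∑ x, p x * A x i / Z x)
    (M : Matrix X X ℝ)
    (hM : ∀ i j, M i j = q i * ∑ x, p x * (A x i * A x j) / Z x ^ 2)
    (C Γ : Matrix X X ℝ) (hC : C = Matrix.diagonal c)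
    (hΓ : Γ = Matrix.diagonal fun i => sP * (q i * (p i ^ 2 / u i ^ 3 * f'' (p i / u i)))) :
    (∀ μ : ℂ, HasEig ((1 + (C - M) * Γ).map (fun x : ℝ => (x : ℂ))) μ → 1 ≤ μ.re)
    ∧ IsUnit (1 + (C - M) * Γ) :=
  newton_jacobian_eigenvalues_general p hp d sD sP hsP f f' f'' hfconv hf' hf'' q u hq hu A hA Z hZ
    c hcdef M hM C Γ hC hΓ

end RDP
end

section
/- Let X be a nonempty finite set, p a probability vector on X with positive entries, d : X × X → [0,∞), s_D ≥ 0, s_P ≥ 0, and let (g_i)_{i∈X} be arbitrary real numbers. Set A(x,i) := exp(−s_D·d(x,i) − s_P·g_i), Z(x) := Σ_k q(k)A(x,k) for a probability vector q on X with positive entries, and M(i,j) := q(i)·Σ_x p(x)·A(x,i)A(x,j)/Z(x)². If the |X| × |X| matrix with entries exp(−s_D·d(x,y)) is invertible, then the symmetric matrix with entries √(q(i)q(j))·Σ_x p(x)·A(x,i)A(x,j)/Z(x)² (which equals diag(√q)·M·diag(√q)^{−1}) is positive definite; consequently every eigenvalue of M is a positive real number. -/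
/-!
With `B x i = √(p x) * A x i * √(q i) / Z x`, the symmetrized matrix is `Bᵀ B`, and
`B = diag(√p / Z) · [exp(-s_D d)] · diag(exp(-s_P g) √q)` is invertible because the
distortion kernel is; so `Bᵀ B` is positive definite, over `ℝ` and after complexification. Since
`diag(√q)⁻¹ M = (Bᵀ B) diag(√q)⁻¹`, an eigenvector `v` of `M` yields the eigenvector
`diag(√q)⁻¹ v` of `Bᵀ B` with the same eigenvalue, which is then the positive Rayleigh quotient.
-/

namespace RDP

variable {X : Type*}

open Matrix
open scoped ComplexOrder

section

variable [Fintype X]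

theorem isUnit_diagonal_of_ne_zero [DecidableEq X] {K : Type*} [Field K] {v : X → K}
    (hv : ∀ i, v i ≠ 0) : IsUnit (diagonal v) :=
  isUnit_diagonal.mpr (Pi.isUnit_iff.mpr fun i => (hv i).isUnit)

theorem HasEig.of_mul_eq_mul [DecidableEq X] {M S P : Matrix X X ℂ} {μ : ℂ} (h : HasEig M μ)
    (hP : IsUnit P) (hPM : P * M = S * P) : HasEig S μ := by
  obtain ⟨v, hv, hMv⟩ := h
  refine ⟨P *ᵥ v, fun h0 => hv (mulVec_injective_iff_isUnit.mpr hP ?_), ?_⟩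
  · rw [h0, mulVec_zero]
  · rw [mulVec_mulVec, ← hPM, ← mulVec_mulVec, hMv, mulVec_smul]

theorem HasEig.pos_of_posDef {S : Matrix X X ℂ} {μ : ℂ} (h : HasEig S μ) (hS : S.PosDef) :
    0 < μ := by
  obtain ⟨v, hv, hSv⟩ := h
  have hquad : star v ⬝ᵥ (S *ᵥ v) = μ * (star v ⬝ᵥ v) := by
    rw [hSv, dotProduct_smul, smul_eq_mul]
  have hnorm : 0 < star v ⬝ᵥ v := dotProduct_star_self_pos_iff.mpr hv
  have hμ : μ = star v ⬝ᵥ (S *ᵥ v) / star v ⬝ᵥ v := by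
    rw [hquad, mul_div_cancel_right₀ _ hnorm.ne']
  exact hμ ▸ div_pos (hS.dotProduct_mulVec_pos hv) hnorm

theorem posDef_map_ofReal_conjTranspose_mul_self [DecidableEq X] {B : Matrix X X ℝ}
    (hB : IsUnit B) : ((Bᴴ * B).map ((↑) : ℝ → ℂ)).PosDef := by
  have hB' : IsUnit (B.map ((↑) : ℝ → ℂ)) := hB.map Complex.ofRealHom.mapMatrix
  have hmap : (Bᴴ * B).map ((↑) : ℝ → ℂ) = (B.map (↑))ᴴ * B.map (↑) := by
    ext i j
    simp [mul_apply]
  rw [hmap]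
  exact .conjTranspose_mul_self _ (mulVec_injective_iff_isUnit.mpr hB')

noncomputable def gramFactor (p q Z : X → ℝ) (A : X → X → ℝ) : Matrix X X ℝ :=
  of fun x i => √(p x) * A x i * √(q i) / Z x

theorem gramFactor_conjTranspose_mul_self {p q : X → ℝ} (hp : ∀ x, 0 ≤ p x)
    (hq : ∀ i, 0 ≤ q i) (Z : X → ℝ) (A : X → X → ℝ) :
    (gramFactor p q Z A)ᴴ * gramFactor p q Z A =
      of fun i j => √(q i * q j) * ∑ x, p x * (A x i * A x j) / Z x ^ 2 := by
  ext i j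
  simp only [conjTranspose_eq_transpose_of_trivial, mul_apply, transpose_apply, gramFactor,
    of_apply, Finset.mul_sum, Real.sqrt_mul (hq i)]
  refine Finset.sum_congr rfl fun x _ => ?_
  have hpx : √(p x) * √(p x) = p x := Real.mul_self_sqrt (hp x)
  linear_combination (√(q i) * √(q j) * (A x i * A x j) / Z x ^ 2) * hpx

theorem gramFactor_eq_diagonal_mul_mul_diagonal [DecidableEq X] {p q Z : X → ℝ}
    {A d : X → X → ℝ} {g : X → ℝ} {sD sP : ℝ}
    (hA : ∀ x i, A x i = Real.exp (-(sD * d x i) - sP * g i)) :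
    gramFactor p q Z A = diagonal (fun x => √(p x) / Z x) *
      of (fun x y => Real.exp (-(sD * d x y))) *
        diagonal (fun i => Real.exp (-(sP * g i)) * √(q i)) := by
  ext x i
  rw [mul_diagonal, diagonal_mul, gramFactor, of_apply, of_apply, hA, sub_eq_add_neg,
    Real.exp_add]
  ring

theorem isUnit_gramFactor [DecidableEq X] {p q Z : X → ℝ} (hp : ∀ x, 0 < p x)
    (hq : ∀ i, 0 < q i) (hZ : ∀ x, Z x ≠ 0) {A d : X → X → ℝ} {g : X → ℝ} {sD sP : ℝ}
    (hA : ∀ x i, A x i = Real.exp (-(sD * d x i) - sP * g i))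
    (hker : IsUnit (of fun x y : X => Real.exp (-(sD * d x y)))) :
    IsUnit (gramFactor p q Z A) := by
  rw [gramFactor_eq_diagonal_mul_mul_diagonal hA]
  have hleft : IsUnit (diagonal fun x => √(p x) / Z x) :=
    isUnit_diagonal_of_ne_zero fun x => div_ne_zero (Real.sqrt_ne_zero'.mpr (hp x)) (hZ x)
  have hright : IsUnit (diagonal fun i => Real.exp (-(sP * g i)) * √(q i)) :=
    isUnit_diagonal_of_ne_zero fun i =>
      mul_ne_zero (Real.exp_ne_zero _) (Real.sqrt_ne_zero'.mpr (hq i))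
  exact (hleft.mul hker).mul hright

theorem diagonal_inv_sqrt_mul_eq [DecidableEq X] {q : X → ℝ} (hq : ∀ i, 0 < q i)
    (T : Matrix X X ℝ) :
    diagonal (fun i => (√(q i))⁻¹) * of (fun i j => q i * T i j) =
      of (fun i j => √(q i * q j) * T i j) * diagonal (fun i => (√(q i))⁻¹) := by
  ext i j
  have hi : √(q i) ≠ 0 := Real.sqrt_ne_zero'.mpr (hq i)
  have hj : √(q j) ≠ 0 := Real.sqrt_ne_zero'.mpr (hq j)
  rw [mul_diagonal, diagonal_mul, of_apply, of_apply, Real.sqrt_mul (hq i).le]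
  field_simp
  rw [Real.sq_sqrt (hq i).le]

end

theorem M_eigenvalues_positive_general [Fintype X] [DecidableEq X]
    (p : X → ℝ) (hp : ∀ x, 0 < p x)
    (d : X → X → ℝ)
    (sD sP : ℝ)
    (g : X → ℝ)
    (q : X → ℝ) (hq : ∀ i, 0 < q i)
    (A : X → X → ℝ) (hA : ∀ x i, A x i = Real.exp (-(sD * d x i) - sP * g i))
    (Z : X → ℝ) (hZ : ∀ x, Z x = ∑ k, q k * A x k)
    (M : Matrix X X ℝ)
    (hM : ∀ i j, M i j = q i * ∑ x, p x * (A x i * A x j) / Z x ^ 2)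
    (hker : IsUnit (Matrix.of fun x y : X => Real.exp (-(sD * d x y)))) :
    (Matrix.of fun i j : X =>
        Real.sqrt (q i * q j) * ∑ x, p x * (A x i * A x j) / Z x ^ 2).PosDef
    ∧ ∀ μ : ℂ, HasEig (M.map (fun x : ℝ => (x : ℂ))) μ → μ.im = 0 ∧ 0 < μ.re := by
  have hZ_ne : ∀ x, Z x ≠ 0 := fun x => (hZ x ▸ Finset.sum_pos
    (fun k _ => mul_pos (hq k) (hA x k ▸ Real.exp_pos _)) ⟨x, Finset.mem_univ x⟩).ne'
  have hB := isUnit_gramFactor hp hq hZ_ne hA hker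
  have hS := gramFactor_conjTranspose_mul_self (fun x => (hp x).le) (fun i => (hq i).le) Z A
  refine ⟨hS ▸ .conjTranspose_mul_self _ (mulVec_injective_iff_isUnit.mpr hB), fun μ hμ => ?_⟩
  set T : Matrix X X ℝ := of fun i j => ∑ x, p x * (A x i * A x j) / Z x ^ 2
  have hMT : M = of fun i j => q i * T i j := ext hM
  have hsim := congrArg Complex.ofRealHom.mapMatrix (diagonal_inv_sqrt_mul_eq hq T)
  rw [map_mul, map_mul, ← hMT] at hsim
  have hdiag : IsUnit (diagonal fun i => (√(q i))⁻¹) :=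
    isUnit_diagonal_of_ne_zero fun i => inv_ne_zero (Real.sqrt_ne_zero'.mpr (hq i))
  have hpos := (hμ.of_mul_eq_mul (hdiag.map _) hsim).pos_of_posDef
    (hS ▸ posDef_map_ofReal_conjTranspose_mul_self hB)
  exact ⟨(Complex.pos_iff.mp hpos).2.symm, (Complex.pos_iff.mp hpos).1⟩

/-- If the distortion kernel `[exp(−s_D d(x,y))]` is invertible, the symmetrized version of `M`
is positive definite, so every eigenvalue of `M` is a positive real number. -/
theorem M_eigenvalues_positive [Fintype X] [DecidableEq X] [Nonempty X]
    (p : X → ℝ) (hp : ∀ x, 0 < p x) (hp1 : ∑ x, p x = 1)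
    (d : X → X → ℝ) (hd : ∀ x y, 0 ≤ d x y)
    (sD sP : ℝ) (hsD : 0 ≤ sD) (hsP : 0 ≤ sP)
    (g : X → ℝ)
    (q : X → ℝ) (hq : ∀ i, 0 < q i) (hq1 : ∑ i, q i = 1)
    (A : X → X → ℝ) (hA : ∀ x i, A x i = Real.exp (-(sD * d x i) - sP * g i))
    (Z : X → ℝ) (hZ : ∀ x, Z x = ∑ k, q k * A x k)
    (M : Matrix X X ℝ)
    (hM : ∀ i j, M i j = q i * ∑ x, p x * (A x i * A x j) / Z x ^ 2)
    (hker : IsUnit (Matrix.of fun x y : X => Real.exp (-(sD * d x y)))) :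
    (Matrix.of fun i j : X =>
        Real.sqrt (q i * q j) * ∑ x, p x * (A x i * A x j) / Z x ^ 2).PosDef
    ∧ ∀ μ : ℂ, HasEig (M.map (fun x : ℝ => (x : ℂ))) μ → μ.im = 0 ∧ 0 < μ.re :=
  M_eigenvalues_positive_general p hp d sD sP g q hq A hA Z hZ M hM hker

end RDP
end

section
/- Let X be a nonempty finite set, p a probability vector on X with positive entries, d : X × X → [0,∞), s_D ≥ 0, s_P ≥ 0, (g_i)_{i∈X} real numbers, and q a probability vector on X with positive entries. Set A(x,i) := exp(−s_D·d(x,i) − s_P·g_i), Z(x) := Σ_k q(k)A(x,k), and M(i,j) := q(i)·Σ_x p(x)·A(x,i)A(x,j)/Z(x)². If Σ_x p(x)A(x,j)/Z(x) = 1 for every j ∈ X, then every complex eigenvalue λ of M satisfies |λ| ≤ 1. -/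
/-!
Under the fixed-point condition the matrix `M` is column stochastic: its entries are nonnegative
and `Σ_i M(i,j) = Σ_x p(x) A(x,j) Z(x) / Z(x)² = Σ_x p(x) A(x,j) / Z(x) = 1`. A column-stochastic
matrix does not increase the `ℓ¹` norm, so `|λ| ‖v‖₁ = ‖M v‖₁ ≤ ‖v‖₁` for an eigenvector `v`.
-/

namespace RDP

variable {X : Type*}

open Matrix Finset

section ColStochastic

variable {n : Type*} [Fintype n] [DecidableEq n] {M : Matrix n n ℝ}

lemma sum_norm_mulVec_le_of_mem_colStochastic (hM : M ∈ colStochastic ℝ n) (v : n → ℂ) :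
    ∑ i, ‖(M.map ((↑) : ℝ → ℂ) *ᵥ v) i‖ ≤ ∑ i, ‖v i‖ :=
  calc ∑ i, ‖(M.map ((↑) : ℝ → ℂ) *ᵥ v) i‖ ≤ ∑ i, ∑ j, M i j * ‖v j‖ := by
        refine sum_le_sum fun i _ => (norm_sum_le _ _).trans (sum_le_sum fun j _ => ?_)
        simp only [map_apply, norm_mul, Complex.norm_real,
          Real.norm_of_nonneg (nonneg_of_mem_colStochastic hM), le_refl]
    _ = ∑ j, (∑ i, M i j) * ‖v j‖ := by
        rw [sum_comm]
        simp_rw [sum_mul]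
    _ = ∑ j, ‖v j‖ := by simp_rw [sum_col_of_mem_colStochastic hM, one_mul]

lemma norm_le_one_of_hasEig_of_mem_colStochastic (hM : M ∈ colStochastic ℝ n) {μ : ℂ}
    (hμ : HasEig (M.map ((↑) : ℝ → ℂ)) μ) : ‖μ‖ ≤ 1 := by
  obtain ⟨v, hv, hMv⟩ := hμ
  have hpos : 0 < ∑ i, ‖v i‖ := by
    obtain ⟨i, hi⟩ := Function.ne_iff.mp hv
    exact sum_pos' (fun i _ => norm_nonneg _) ⟨i, mem_univ i, norm_pos_iff.mpr hi⟩
  refine le_of_mul_le_mul_right ?_ hpos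
  calc ‖μ‖ * ∑ i, ‖v i‖ = ∑ i, ‖(M.map ((↑) : ℝ → ℂ) *ᵥ v) i‖ := by
        simp [hMv, mul_sum]
    _ ≤ 1 * ∑ i, ‖v i‖ := by
        rw [one_mul]
        exact sum_norm_mulVec_le_of_mem_colStochastic hM v

end ColStochastic

lemma sum_col_eq_sum_div [Fintype X] (p q : X → ℝ) (A : X → X → ℝ) (Z : X → ℝ)
    (hZ : ∀ x, Z x = ∑ k, q k * A x k) (M : Matrix X X ℝ)
    (hM : ∀ i j, M i j = q i * ∑ x, p x * (A x i * A x j) / Z x ^ 2) (j : X) :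
    ∑ i, M i j = ∑ x, p x * A x j / Z x :=
  calc ∑ i, M i j = ∑ i, ∑ x, q i * A x i * (p x * A x j / Z x ^ 2) := by
        simp_rw [hM, mul_sum]
        exact sum_congr rfl fun i _ => sum_congr rfl fun x _ => by ring
    _ = ∑ x, Z x * (p x * A x j / Z x ^ 2) := by
        rw [sum_comm]
        simp_rw [hZ, sum_mul]
    -- also when `Z x = 0`: both sides are then `0` by the convention `c / 0 = 0`
    _ = ∑ x, p x * A x j / Z x := by
        refine sum_congr rfl fun x _ => ?_
        rcases eq_or_ne (Z x) 0 with h | h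
        · simp [h]
        · field_simp

theorem M_eigenvalues_le_one_general [Fintype X]
    (p : X → ℝ) (hp : ∀ x, 0 < p x)
    (d : X → X → ℝ)
    (sD sP : ℝ)
    (g : X → ℝ)
    (q : X → ℝ) (hq : ∀ i, 0 < q i)
    (A : X → X → ℝ) (hA : ∀ x i, A x i = Real.exp (-(sD * d x i) - sP * g i))
    (Z : X → ℝ) (hZ : ∀ x, Z x = ∑ k, q k * A x k)
    (M : Matrix X X ℝ)
    (hM : ∀ i j, M i j = q i * ∑ x, p x * (A x i * A x j) / Z x ^ 2)
    (hfix : ∀ j, ∑ x, p x * A x j / Z x = 1) :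
    ∀ μ : ℂ, HasEig (M.map (fun x : ℝ => (x : ℂ))) μ → ‖μ‖ ≤ 1 := by
  classical
  have hA_nonneg : ∀ x i, 0 ≤ A x i := fun x i => hA x i ▸ (Real.exp_pos _).le
  have hM_colStochastic : M ∈ colStochastic ℝ X := by
    refine mem_colStochastic_iff_sum.mpr ⟨fun i j => ?_, fun j => ?_⟩
    · rw [hM]
      exact mul_nonneg (hq i).le <| sum_nonneg fun x _ => div_nonneg
        (mul_nonneg (hp x).le (mul_nonneg (hA_nonneg x i) (hA_nonneg x j))) (sq_nonneg _)
    · rw [sum_col_eq_sum_div p q A Z hZ M hM, hfix]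
  exact fun μ => norm_le_one_of_hasEig_of_mem_colStochastic hM_colStochastic

/-- Under the fixed-point (first-order optimality) condition `Σ_x p(x)A(x,j)/Z(x) = 1` for all
`j`, every complex eigenvalue `λ` of `M` satisfies `|λ| ≤ 1`. -/
theorem M_eigenvalues_le_one [Fintype X] [Nonempty X]
    (p : X → ℝ) (hp : ∀ x, 0 < p x) (hp1 : ∑ x, p x = 1)
    (d : X → X → ℝ) (hd : ∀ x y, 0 ≤ d x y)
    (sD sP : ℝ) (hsD : 0 ≤ sD) (hsP : 0 ≤ sP)
    (g : X → ℝ)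
    (q : X → ℝ) (hq : ∀ i, 0 < q i) (hq1 : ∑ i, q i = 1)
    (A : X → X → ℝ) (hA : ∀ x i, A x i = Real.exp (-(sD * d x i) - sP * g i))
    (Z : X → ℝ) (hZ : ∀ x, Z x = ∑ k, q k * A x k)
    (M : Matrix X X ℝ)
    (hM : ∀ i j, M i j = q i * ∑ x, p x * (A x i * A x j) / Z x ^ 2)
    (hfix : ∀ j, ∑ x, p x * A x j / Z x = 1) :
    ∀ μ : ℂ, HasEig (M.map (fun x : ℝ => (x : ℂ))) μ → ‖μ‖ ≤ 1 :=
  M_eigenvalues_le_one_general p hp d sD sP g q hq A hA Z hZ M hM hfix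

end RDP
end

section
/- Let X be a nonempty finite set and p a probability vector on X with positive entries. Let Q be a stochastic matrix on X with output marginal Qm, let a : X × X → (0,∞) be a positive function, and let λ : X → (0,∞) satisfy Σ_x p(x)·λ(x)·a(x,y) ≤ 1 for every y ∈ X. Then I(p,Q) ≥ Σ_x p(x)·log λ(x) + Σ_{x,y} p(x)Q(y|x)·log a(x,y). -/
namespace RDP

variable {X : Type*}

/-! Since `log t ≤ t - 1`, each term of
`I(p,Q) - Σ p log λ - Σ pQ log a = Σ pQ log (Q / (λ a Qm))` is at least `pQ - pλa·Qm`.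
Summing, the lower bound `1 - Σ_y Qm(y) Σ_x pλa` is nonnegative by the hypothesis on `λ`,
because `Qm` is a probability vector. -/

open Finset Real

theorem mul_log_sub_log_div_le {q c m : ℝ} (hq : 0 ≤ q) (hc : 0 < c) (hm : 0 ≤ m)
    (hqm : q ≠ 0 → m ≠ 0) :
    q * (log c - log (q / m)) ≤ c * m - q := by
  obtain rfl | hq := hq.eq_or_lt
  · simpa using mul_nonneg hc.le hm
  have hm : 0 < m := hm.lt_of_ne' (hqm hq.ne')
  calc q * (log c - log (q / m)) = q * log (c * m / q) := by
        rw [log_div hq.ne' hm.ne', log_div (by positivity) hq.ne', log_mul hc.ne' hm.ne']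
        ring
    _ ≤ q * (c * m / q - 1) := by gcongr; exact log_le_sub_one_of_pos (by positivity)
    _ = c * m - q := by field_simp

section Stochastic

variable [Fintype X] {p : X → ℝ} {Q : X → X → ℝ}

theorem IsStochastic.sum_sum_mul (hQ : IsStochastic Q) (p f : X → ℝ) :
    ∑ x, ∑ y, p x * Q x y * f x = ∑ x, p x * f x := by
  refine sum_congr rfl fun x _ => ?_
  rw [← sum_mul, ← mul_sum, hQ.2 x, mul_one]

theorem IsStochastic.sum_sum (hQ : IsStochastic Q) (p : X → ℝ) :
    ∑ x, ∑ y, p x * Q x y = ∑ x, p x := by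
  simpa using hQ.sum_sum_mul p 1

theorem IsStochastic.sum_marg (hQ : IsStochastic Q) (p : X → ℝ) :
    ∑ y, marg p Q y = ∑ x, p x := by
  rw [← hQ.sum_sum p, sum_comm]
  rfl

theorem IsStochastic.marg_nonneg (hQ : IsStochastic Q) (hp : ∀ x, 0 ≤ p x) (y : X) :
    0 ≤ marg p Q y :=
  sum_nonneg fun x _ => mul_nonneg (hp x) (hQ.1 x y)

theorem IsStochastic.marg_pos (hQ : IsStochastic Q) (hp : ∀ x, 0 ≤ p x) {x y : X}
    (hpx : 0 < p x) (hQxy : 0 < Q x y) : 0 < marg p Q y :=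
  (mul_pos hpx hQxy).trans_le <|
    single_le_sum (f := fun x => p x * Q x y) (fun x _ => mul_nonneg (hp x) (hQ.1 x y)) (mem_univ x)

theorem IsStochastic.sum_sum_mul_marg_le_one (hQ : IsStochastic Q) (hp : ∀ x, 0 ≤ p x)
    (hp1 : ∑ x, p x = 1) {k : X → X → ℝ} (hk : ∀ y, ∑ x, k x y ≤ 1) :
    ∑ x, ∑ y, k x y * marg p Q y ≤ 1 :=
  calc ∑ x, ∑ y, k x y * marg p Q y = ∑ y, (∑ x, k x y) * marg p Q y := by
        simp only [sum_mul]; exact sum_comm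
    _ ≤ ∑ y, 1 * marg p Q y := by gcongr with y; exacts [hQ.marg_nonneg hp y, hk y]
    _ = 1 := by simp only [one_mul, hQ.sum_marg, hp1]

end Stochastic

theorem mutInfo_lower_bound_general [Fintype X]
    (p : X → ℝ) (hp : ∀ x, 0 < p x) (hp1 : ∑ x, p x = 1)
    (Q : X → X → ℝ) (hQ : IsStochastic Q)
    (a : X → X → ℝ) (ha : ∀ x y, 0 < a x y)
    (lam : X → ℝ) (hlam : ∀ x, 0 < lam x)
    (hineq : ∀ y, ∑ x, p x * lam x * a x y ≤ 1) :
    ∑ x, p x * Real.log (lam x) + ∑ x, ∑ y, p x * Q x y * Real.log (a x y)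
      ≤ mutInfo p Q := by
  have hp0 : ∀ x, 0 ≤ p x := fun x => (hp x).le
  have hterm : ∀ x y, p x * Q x y * (log (lam x * a x y) - log (Q x y / marg p Q y))
      ≤ p x * lam x * a x y * marg p Q y - p x * Q x y := fun x y => by
    have := mul_log_sub_log_div_le (hQ.1 x y) (mul_pos (hlam x) (ha x y))
      (hQ.marg_nonneg hp0 y) fun h => (hQ.marg_pos hp0 (hp x) ((hQ.1 x y).lt_of_ne' h)).ne'
    linarith [mul_le_mul_of_nonneg_left this (hp0 x)]
  calc ∑ x, p x * log (lam x) + ∑ x, ∑ y, p x * Q x y * log (a x y)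
      = ∑ x, ∑ y, p x * Q x y * log (lam x * a x y) := by
        simp only [← hQ.sum_sum_mul p, ← sum_add_distrib, log_mul (hlam _).ne' (ha _ _).ne',
          mul_add]
    _ ≤ mutInfo p Q +
          (∑ x, ∑ y, p x * lam x * a x y * marg p Q y - ∑ x, ∑ y, p x * Q x y) := by
        rw [mutInfo, ← sum_sub_distrib, ← sum_add_distrib]
        refine sum_le_sum fun x _ => ?_
        rw [← sum_sub_distrib, ← sum_add_distrib]
        exact sum_le_sum fun y _ => by linarith [hterm x y]
    _ ≤ mutInfo p Q := by linarith [hQ.sum_sum p, hQ.sum_sum_mul_marg_le_one hp0 hp1 hineq]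

/-- Core inequality for the stopping criterion: if `Σ_x p(x)λ(x)a(x,y) ≤ 1` for every `y`, then
`I(p,Q) ≥ Σ_x p(x) log λ(x) + Σ_{x,y} p(x)Q(y|x) log a(x,y)`. -/
theorem mutInfo_lower_bound [Fintype X] [Nonempty X]
    (p : X → ℝ) (hp : ∀ x, 0 < p x) (hp1 : ∑ x, p x = 1)
    (Q : X → X → ℝ) (hQ : IsStochastic Q)
    (a : X → X → ℝ) (ha : ∀ x y, 0 < a x y)
    (lam : X → ℝ) (hlam : ∀ x, 0 < lam x)
    (hineq : ∀ y, ∑ x, p x * lam x * a x y ≤ 1) :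
    ∑ x, p x * Real.log (lam x) + ∑ x, ∑ y, p x * Q x y * Real.log (a x y)
      ≤ mutInfo p Q :=
  mutInfo_lower_bound_general p hp hp1 Q hQ a ha lam hlam hineq

end RDP
end

section
/- Let X be a nonempty finite set and let p, q be probability vectors on X with q(x) > 0 for every x. Then for every integer n ≥ 1, | Σ_x q(x)·f_n(p(x)/q(x)) − Σ_x |p(x) − q(x)| | ≤ 2/(n·π), where f_n(x) := (2/π)·(x−1)·arctan(n(x−1)). In particular, the f-divergences generated by f_n converge to Σ_x |p(x) − q(x)| uniformly over all such pairs (p,q) as n → ∞. -/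
/-!
Writing `t = p x - q x`, the `x`-th term of the divergence is `(2/π) t arctan (n t / q x)`.
Since `arctan` is odd, its distance to `|t|` is `(2/π) |t| (π/2 - arctan (n |t| / q x))`,
and `π/2 - arctan u = arctan u⁻¹ ≤ u⁻¹` bounds it by `2 q x / (n π)`; summing over `x`
uses `∑ x, q x = 1`.
-/

open Real

namespace Real

theorem arctan_le_self {x : ℝ} (hx : 0 ≤ x) : arctan x ≤ x :=
  calc arctan x ≤ tan (arctan x) := le_tan (arctan_nonneg.mpr hx) (arctan_lt_pi_div_two x)
    _ = x := tan_arctan x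

theorem pi_div_two_sub_arctan_le_inv {x : ℝ} (hx : 0 < x) : π / 2 - arctan x ≤ x⁻¹ := by
  rw [← arctan_inv_of_pos hx]
  exact arctan_le_self (inv_nonneg.mpr hx.le)

theorem mul_arctan_mul_eq_abs (c t : ℝ) : t * arctan (c * t) = |t| * arctan (c * |t|) := by
  rcases le_total 0 t with ht | ht
  · rw [abs_of_nonneg ht]
  · rw [abs_of_nonpos ht, mul_neg, arctan_neg, neg_mul_neg]

end Real

noncomputable def smoothAbs (c t : ℝ) : ℝ := 2 / π * t * arctan (c * t)

theorem abs_smoothAbs_sub_abs_le {c : ℝ} (hc : 0 < c) (t : ℝ) :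
    |smoothAbs c t - (|t|)| ≤ 2 / (π * c) := by
  rcases eq_or_ne t 0 with rfl | ht
  · simp only [smoothAbs, mul_zero, zero_mul, abs_zero, sub_zero]
    positivity
  have hu : 0 < c * |t| := by positivity
  have hgap : |t| - smoothAbs c t = 2 / π * |t| * (π / 2 - arctan (c * |t|)) := by
    rw [smoothAbs, mul_assoc, mul_arctan_mul_eq_abs]
    field_simp
  have hgap_nonneg : 0 ≤ 2 / π * |t| * (π / 2 - arctan (c * |t|)) :=
    mul_nonneg (by positivity) (sub_nonneg.mpr (arctan_lt_pi_div_two _).le)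
  rw [abs_sub_comm, hgap, abs_of_nonneg hgap_nonneg]
  calc 2 / π * |t| * (π / 2 - arctan (c * |t|)) ≤ 2 / π * |t| * (c * |t|)⁻¹ := by
        gcongr
        exact pi_div_two_sub_arctan_le_inv hu
    _ = 2 / (π * c) := by field_simp

theorem mul_smoothAbs_div_sub_one {q : ℝ} (hq : 0 < q) (c p : ℝ) :
    q * smoothAbs c (p / q - 1) = smoothAbs (c / q) (p - q) := by
  have hpq : p / q - 1 = (p - q) / q := by field_simp
  rw [smoothAbs, smoothAbs, hpq, mul_div_assoc', div_mul_eq_mul_div]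
  field_simp

theorem fdiv_approximant_close_to_tv_general {X : Type*} [Fintype X]
    (p q : X → ℝ) (hq : ∀ x, 0 < q x) (hq1 : ∑ x, q x = 1) :
    ∀ n : ℕ, 1 ≤ n →
      abs ((∑ x, q x * (2 / Real.pi * (p x / q x - 1) * Real.arctan (n * (p x / q x - 1))))
          - ∑ x, |p x - q x|)
        ≤ 2 / (n * Real.pi) := by
  intro n hn
  have hn : (0 : ℝ) < n := by exact_mod_cast hn
  change |∑ x, q x * smoothAbs n (p x / q x - 1) - _| ≤ _
  calc _ = |∑ x, (smoothAbs (n / q x) (p x - q x) - |p x - q x|)| := by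
        simp only [mul_smoothAbs_div_sub_one (hq _), Finset.sum_sub_distrib]
    _ ≤ ∑ x, 2 / (π * (n / q x)) :=
        (Finset.abs_sum_le_sum_abs _ _).trans <| Finset.sum_le_sum fun x _ ↦
          abs_smoothAbs_sub_abs_le (div_pos hn (hq x)) _
    _ = 2 / (n * π) * ∑ x, q x := by
        rw [Finset.mul_sum]
        exact Finset.sum_congr rfl fun x _ ↦ by field_simp [(hq x).ne']
    _ = 2 / (n * π) := by rw [hq1, mul_one]

/-- The f-divergences generated by `f_n(x) = (2/π)(x−1) arctan(n(x−1))` are within `2/(nπ)` of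
the total-variation type divergence `Σ_x |p(x) − q(x)|`, uniformly over all pairs `(p,q)`. -/
theorem fdiv_approximant_close_to_tv {X : Type*} [Fintype X] [Nonempty X]
    (p q : X → ℝ) (hp0 : ∀ x, 0 ≤ p x) (hp1 : ∑ x, p x = 1)
    (hq : ∀ x, 0 < q x) (hq1 : ∑ x, q x = 1) :
    ∀ n : ℕ, 1 ≤ n →
      abs ((∑ x, q x * (2 / Real.pi * (p x / q x - 1) * Real.arctan (n * (p x / q x - 1))))
          - ∑ x, |p x - q x|)
        ≤ 2 / (n * Real.pi) :=
  fdiv_approximant_close_to_tv_general p q hq hq1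
end

section
/- Let X be a nonempty finite set, f : (0,∞) → ℝ convex and differentiable, and let p, q, r be probability vectors on X with all entries positive. Then Σ_i r(i)·f(p(i)/r(i)) ≥ Σ_i q(i)·f(p(i)/q(i)) + Σ_i (r(i) − q(i))·( f(p(i)/q(i)) − (p(i)/q(i))·f'(p(i)/q(i)) ). That is, the map q ↦ D_f(p||q) on positive probability vectors dominates its first-order Taylor expansion at any point q, the partial derivative of D_f(p||·) at q in coordinate i being g(p(i), q(i)) = f(p(i)/q(i)) − (p(i)/q(i))·f'(p(i)/q(i)). -/
open Set

namespace ConvexOn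

variable {S : Set ℝ} {f : ℝ → ℝ} {f' x y : ℝ}

lemma add_deriv_mul_sub_le_of_hasDerivAt (hf : ConvexOn ℝ S f) (hx : x ∈ S) (hy : y ∈ S)
    (hfx : HasDerivAt f f' x) :
    f x + f' * (y - x) ≤ f y := by
  rcases lt_trichotomy x y with hxy | rfl | hyx
  · have hslope := hf.le_slope_of_hasDerivAt hx hy hxy hfx
    rw [slope_def_field, le_div_iff₀ (sub_pos.mpr hxy)] at hslope
    linarith
  · simp
  · have hslope := hf.slope_le_of_hasDerivAt hy hx hyx hfx
    rw [slope_def_field, div_le_iff₀ (sub_pos.mpr hyx)] at hslope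
    linarith

/-- The map `b ↦ b * f (a / b)` lies above its tangent line at `q`, whose slope is
`f (a / q) - a / q * f' (a / q)`. -/
lemma mul_comp_div_tangent_le (hf : ConvexOn ℝ (Ioi 0) f) {a q r : ℝ}
    (ha : 0 < a) (hq : 0 < q) (hr : 0 < r) (hfx : HasDerivAt f f' (a / q)) :
    q * f (a / q) + (r - q) * (f (a / q) - a / q * f') ≤ r * f (a / r) := by
  have htangent : f (a / q) + f' * (a / r - a / q) ≤ f (a / r) :=
    hf.add_deriv_mul_sub_le_of_hasDerivAt (div_pos ha hq) (div_pos ha hr) hfx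
  have hrq : r * (a / r) = q * (a / q) := by field_simp
  calc q * f (a / q) + (r - q) * (f (a / q) - a / q * f')
      = r * (f (a / q) + f' * (a / r - a / q)) := by linear_combination -f' * hrq
    _ ≤ r * f (a / r) := mul_le_mul_of_nonneg_left htangent hr.le

end ConvexOn

theorem fdiv_ge_taylor_expansion_general {X : Type*} [Fintype X]
    (f f' : ℝ → ℝ) (hfconv : ConvexOn ℝ (Set.Ioi 0) f)
    (hf' : ∀ x ∈ Set.Ioi (0 : ℝ), HasDerivAt f (f' x) x)
    (p q r : X → ℝ) (hp : ∀ i, 0 < p i)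
    (hq : ∀ i, 0 < q i)
    (hr : ∀ i, 0 < r i) :
    ∑ i, q i * f (p i / q i)
        + ∑ i, (r i - q i) * (f (p i / q i) - p i / q i * f' (p i / q i))
      ≤ ∑ i, r i * f (p i / r i) := by
  rw [← Finset.sum_add_distrib]
  exact Finset.sum_le_sum fun i _ =>
    hfconv.mul_comp_div_tangent_le (hp i) (hq i) (hr i) (hf' _ (div_pos (hp i) (hq i)))

/-- First-order convexity inequality for f-divergences: `D_f(p‖r)` dominates the first-order
Taylor expansion of `q ↦ D_f(p‖q)` at `q`, whose partial derivative in coordinate `i` is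
`g(p(i),q(i)) = f(p(i)/q(i)) − (p(i)/q(i)) f'(p(i)/q(i))`. -/
theorem fdiv_ge_taylor_expansion {X : Type*} [Fintype X] [Nonempty X]
    (f f' : ℝ → ℝ) (hfconv : ConvexOn ℝ (Set.Ioi 0) f)
    (hf' : ∀ x ∈ Set.Ioi (0 : ℝ), HasDerivAt f (f' x) x)
    (p q r : X → ℝ) (hp : ∀ i, 0 < p i) (hp1 : ∑ i, p i = 1)
    (hq : ∀ i, 0 < q i) (hq1 : ∑ i, q i = 1)
    (hr : ∀ i, 0 < r i) (hr1 : ∑ i, r i = 1) :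
    ∑ i, q i * f (p i / q i)
        + ∑ i, (r i - q i) * (f (p i / q i) - p i / q i * f' (p i / q i))
      ≤ ∑ i, r i * f (p i / r i) :=
  fdiv_ge_taylor_expansion_general f f' hfconv hf' p q r hp hq hr
end

section
/- Let X be a nonempty finite set, p a probability vector on X with positive entries, d : X × X → [0,∞), s_D ≥ 0, s_P ≥ 0, (g_i)_{i∈X} real numbers, and q a probability vector on X with positive entries. Set A(x,i) := exp(−s_D·d(x,i) − s_P·g_i), Z(x) := Σ_k q(k)A(x,k), and M(i,j) := q(i)·Σ_x p(x)·A(x,i)A(x,j)/Z(x)². Assume that (a) the |X| × |X| matrix with entries exp(−s_D·d(x,y)) is invertible, and (b) Σ_x p(x)A(x,j)/Z(x) = 1 for every j ∈ X. Then every eigenvalue θ of the matrix I − M is real and satisfies 0 ≤ θ < 1. -/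
namespace RDP

variable {X : Type*}

/-! If `(I - M) v = θ v` then `M v = (1 - θ) v`, and `M = diag q · Aᵀ · diag (p / Z²) · A`.
Pairing the eigenvector equation with `v̄ / q` gives the Rayleigh identity
`(1 - θ) · ∑ᵢ |vᵢ|² / qᵢ = ∑ₓ p x / (Z x)² · |(A v)ₓ|²`.
The right-hand side is positive because `A` is the invertible kernel times an invertible diagonal
matrix, and it is at most `∑ᵢ |vᵢ|² / qᵢ` by Cauchy–Schwarz with weights `q k · A x k` (whose
total is `Z x`) followed by the fixed-point condition. Hence `1 - θ` is real and lies in `(0, 1]`. -/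

open Matrix Finset ComplexConjugate

section
variable {ι κ : Type*} [Fintype ι] [Fintype κ]

lemma sum_mul_normSq_pos {w : ι → ℝ} (hw : ∀ i, 0 < w i) {v : ι → ℂ} (hv : v ≠ 0) :
    0 < ∑ i, w i * Complex.normSq (v i) := by
  obtain ⟨i, hi⟩ := Function.ne_iff.mp hv
  exact sum_pos' (fun j _ => mul_nonneg (hw j).le (Complex.normSq_nonneg _))
    ⟨i, mem_univ i, mul_pos (hw i) (Complex.normSq_pos.mpr hi)⟩

lemma eigenvalue_mul_sum_inv_mul_normSq_eq {B : Matrix κ ι ℝ} {q : ι → ℝ} {r : κ → ℝ} {M : Matrix ι ι ℝ}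
    (hM : ∀ i j, M i j = q i * ∑ x, r x * (B x i * B x j)) (hq : ∀ i, q i ≠ 0)
    {μ : ℂ} {v : ι → ℂ} (hv : M.map (↑) *ᵥ v = μ • v) :
    μ * ∑ i, (q i)⁻¹ * Complex.normSq (v i) =
      ∑ x, r x * Complex.normSq ((B.map (↑) *ᵥ v) x) := by
  set s := B.map ((↑) : ℝ → ℂ) *ᵥ v
  have hrow : ∀ i, μ * v i = q i * ∑ x, r x * B x i * s x := by
    intro i
    rw [← smul_eq_mul, ← Pi.smul_apply, ← hv]
    simp only [s, mulVec, dotProduct, map_apply, hM, Complex.ofReal_mul, Complex.ofReal_sum,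
      sum_mul, mul_sum]
    rw [sum_comm]
    exact sum_congr rfl fun x _ => sum_congr rfl fun j _ => by ring
  push_cast
  calc μ * ∑ i, ((q i : ℂ))⁻¹ * (Complex.normSq (v i) : ℂ)
      = ∑ i, conj (v i) * ∑ x, r x * B x i * s x := by
        rw [mul_sum]
        refine sum_congr rfl fun i _ => ?_
        have hqi : (q i : ℂ) ≠ 0 := Complex.ofReal_ne_zero.mpr (hq i)
        rw [Complex.normSq_eq_conj_mul_self]
        field_simp
        linear_combination conj (v i) * hrow i
    _ = ∑ x, r x * (conj (s x) * s x) := by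
        simp only [s, mulVec, dotProduct, map_apply, map_sum, map_mul, Complex.conj_ofReal,
          mul_sum, sum_mul]
        rw [sum_comm]
        refine sum_congr rfl fun x _ => ?_
        rw [sum_comm]
        exact sum_congr rfl fun i _ => sum_congr rfl fun j _ => by ring
    _ = _ := by simp only [Complex.normSq_eq_conj_mul_self]

lemma normSq_sum_mul_le {w q : ι → ℝ} (hw : ∀ i, 0 ≤ w i) (hq : ∀ i, 0 < q i) (z : ι → ℂ) :
    Complex.normSq (∑ i, (w i : ℂ) * z i) ≤
      (∑ i, q i * w i) * ∑ i, w i * ((q i)⁻¹ * Complex.normSq (z i)) := by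
  have htri : ‖∑ i, (w i : ℂ) * z i‖ ≤ ∑ i, w i * ‖z i‖ :=
    (norm_sum_le _ _).trans_eq <| sum_congr rfl fun i _ => by
      rw [norm_mul, Complex.norm_real, Real.norm_of_nonneg (hw i)]
  rw [← Complex.sq_norm]
  calc ‖∑ i, (w i : ℂ) * z i‖ ^ 2 ≤ (∑ i, w i * ‖z i‖) ^ 2 :=
        pow_le_pow_left₀ (norm_nonneg _) htri 2
    _ ≤ _ := by
        refine sum_sq_le_sum_mul_sum_of_sq_le_mul univ
          (fun i _ => mul_nonneg (hq i).le (hw i))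
          (fun i _ => mul_nonneg (hw i) (mul_nonneg (inv_nonneg.mpr (hq i).le)
            (Complex.normSq_nonneg _))) fun i _ => le_of_eq ?_
        have hqi := (hq i).ne'
        rw [← Complex.sq_norm]
        field_simp

lemma sum_mul_normSq_mulVec_le {B : Matrix κ ι ℝ} {q : ι → ℝ} {r : κ → ℝ}
    (hB : ∀ x i, 0 ≤ B x i) (hq : ∀ i, 0 < q i) (hr : ∀ x, 0 ≤ r x)
    (hfix : ∀ i, ∑ x, r x * (∑ k, q k * B x k) * B x i = 1) (v : ι → ℂ) :
    ∑ x, r x * Complex.normSq ((B.map (↑) *ᵥ v) x) ≤ ∑ i, (q i)⁻¹ * Complex.normSq (v i) :=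
  calc ∑ x, r x * Complex.normSq ((B.map (↑) *ᵥ v) x)
      ≤ ∑ x, r x * ((∑ k, q k * B x k) * ∑ i, B x i * ((q i)⁻¹ * Complex.normSq (v i))) :=
        sum_le_sum fun x _ =>
          mul_le_mul_of_nonneg_left (normSq_sum_mul_le (hB x) hq v) (hr x)
    _ = ∑ x, ∑ i, r x * (∑ k, q k * B x k) * B x i * ((q i)⁻¹ * Complex.normSq (v i)) :=
        sum_congr rfl fun x _ => by
          rw [← mul_assoc, mul_sum univ (fun i => B x i * _)]
          simp only [mul_assoc]
    _ = ∑ i, (∑ x, r x * (∑ k, q k * B x k) * B x i) * ((q i)⁻¹ * Complex.normSq (v i)) := by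
        rw [sum_comm]
        simp only [sum_mul]
    _ = _ := by simp only [hfix, one_mul]

lemma im_eq_zero_and_re_mem_Ioc_of_mul_eq {μ : ℂ} {N Q : ℝ} (h : μ * N = Q) (hN : 0 < N)
    (hQ : 0 < Q) (hQN : Q ≤ N) : μ.im = 0 ∧ μ.re ∈ Set.Ioc 0 1 := by
  have hμ : μ = ((Q / N : ℝ) : ℂ) := by
    rw [Complex.ofReal_div, eq_div_iff (Complex.ofReal_ne_zero.mpr hN.ne'), h]
  rw [hμ, Complex.ofReal_im, Complex.ofReal_re]
  exact ⟨rfl, div_pos hQ hN, (div_le_one hN).mpr hQN⟩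

theorem HasEig.im_eq_zero_and_re_mem_Ioc [DecidableEq ι] {B M : Matrix ι ι ℝ} {q r : ι → ℝ}
    (hB : ∀ x i, 0 ≤ B x i) (hB_unit : IsUnit B) (hq : ∀ i, 0 < q i) (hr : ∀ x, 0 < r x)
    (hM : ∀ i j, M i j = q i * ∑ x, r x * (B x i * B x j))
    (hfix : ∀ i, ∑ x, r x * (∑ k, q k * B x k) * B x i = 1)
    {μ : ℂ} (hμ : HasEig (M.map (↑)) μ) : μ.im = 0 ∧ μ.re ∈ Set.Ioc 0 1 := by
  obtain ⟨v, hv0, hv⟩ := hμ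
  have hBv : B.map (↑) *ᵥ v ≠ 0 := by
    have hBc : IsUnit (B.map ((↑) : ℝ → ℂ)) := hB_unit.map Complex.ofRealHom.mapMatrix
    exact fun h => hv0 (mulVec_injective_iff_isUnit.mpr hBc (h.trans (mulVec_zero _).symm))
  exact im_eq_zero_and_re_mem_Ioc_of_mul_eq (eigenvalue_mul_sum_inv_mul_normSq_eq hM (fun i => (hq i).ne') hv)
    (sum_mul_normSq_pos (fun i => inv_pos.mpr (hq i)) hv0) (sum_mul_normSq_pos hr hBv)
    (sum_mul_normSq_mulVec_le hB hq (fun x => (hr x).le) hfix v)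

end

lemma HasEig.one_sub [Fintype X] [DecidableEq X] {N : Matrix X X ℂ} {μ : ℂ}
    (h : HasEig (1 - N) μ) : HasEig N (1 - μ) := by
  obtain ⟨v, hv0, hv⟩ := h
  refine ⟨v, hv0, ?_⟩
  rw [sub_mulVec, one_mulVec] at hv
  rw [sub_smul, one_smul, ← hv, sub_sub_cancel]

theorem one_sub_M_eigenvalues_general [Fintype X] [DecidableEq X]
    (p : X → ℝ) (hp : ∀ x, 0 < p x)
    (d : X → X → ℝ)
    (sD sP : ℝ)
    (g : X → ℝ)
    (q : X → ℝ) (hq : ∀ i, 0 < q i)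
    (A : X → X → ℝ) (hA : ∀ x i, A x i = Real.exp (-(sD * d x i) - sP * g i))
    (Z : X → ℝ) (hZ : ∀ x, Z x = ∑ k, q k * A x k)
    (M : Matrix X X ℝ)
    (hM : ∀ i j, M i j = q i * ∑ x, p x * (A x i * A x j) / Z x ^ 2)
    (hker : IsUnit (Matrix.of fun x y : X => Real.exp (-(sD * d x y))))
    (hfix : ∀ j, ∑ x, p x * A x j / Z x = 1) :
    ∀ μ : ℂ, HasEig ((1 - M).map (fun x : ℝ => (x : ℂ))) μ →
      μ.im = 0 ∧ 0 ≤ μ.re ∧ μ.re < 1 := by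
  intro μ hμ
  have hA_pos : ∀ x i, 0 < A x i := fun x i => hA x i ▸ Real.exp_pos _
  have hZ_pos : ∀ x, 0 < Z x := fun x =>
    hZ x ▸ sum_pos (fun k _ => mul_pos (hq k) (hA_pos x k)) ⟨x, mem_univ x⟩
  have hA_unit : IsUnit (of A) := by
    have hA_eq : of A = (of fun x y => Real.exp (-(sD * d x y))) *
        diagonal fun i => Real.exp (-(sP * g i)) := by
      ext x i
      rw [mul_diagonal, of_apply, of_apply, hA, ← Real.exp_add, sub_eq_add_neg]
    rw [hA_eq]
    exact hker.mul (isUnit_diagonal.mpr (Pi.isUnit_iff.mpr fun i => (Real.exp_pos _).ne'.isUnit))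
  have hμ' : HasEig (M.map (↑)) (1 - μ) := by
    rw [Matrix.map_sub _ Complex.ofReal_sub,
      Matrix.map_one _ Complex.ofReal_zero Complex.ofReal_one] at hμ
    exact hμ.one_sub
  obtain ⟨him, hre_pos, hre_le⟩ := HasEig.im_eq_zero_and_re_mem_Ioc (B := of A)
    (r := fun x => p x / Z x ^ 2) (fun x i => (hA_pos x i).le) hA_unit hq
    (fun x => div_pos (hp x) (pow_pos (hZ_pos x) 2))
    (fun i j => by simp only [hM, of_apply, div_mul_eq_mul_div])
    (fun i => by
      rw [← hfix i]
      refine sum_congr rfl fun x _ => ?_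
      have hZx := (hZ_pos x).ne'
      simp only [of_apply, ← hZ]
      field_simp) hμ'
  simp only [Complex.sub_im, Complex.sub_re, Complex.one_im, Complex.one_re] at him hre_pos hre_le
  exact ⟨by linarith, by linarith, by linarith⟩

/-- At an optimal reconstruction distribution (fixed-point condition (b)) and with a full-rank
distortion kernel (assumption (a)), every eigenvalue `θ` of `I − M` is real and satisfies
`0 ≤ θ < 1`. -/
theorem one_sub_M_eigenvalues [Fintype X] [DecidableEq X] [Nonempty X]
    (p : X → ℝ) (hp : ∀ x, 0 < p x) (hp1 : ∑ x, p x = 1)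
    (d : X → X → ℝ) (hd : ∀ x y, 0 ≤ d x y)
    (sD sP : ℝ) (hsD : 0 ≤ sD) (hsP : 0 ≤ sP)
    (g : X → ℝ)
    (q : X → ℝ) (hq : ∀ i, 0 < q i) (hq1 : ∑ i, q i = 1)
    (A : X → X → ℝ) (hA : ∀ x i, A x i = Real.exp (-(sD * d x i) - sP * g i))
    (Z : X → ℝ) (hZ : ∀ x, Z x = ∑ k, q k * A x k)
    (M : Matrix X X ℝ)
    (hM : ∀ i j, M i j = q i * ∑ x, p x * (A x i * A x j) / Z x ^ 2)
    (hker : IsUnit (Matrix.of fun x y : X => Real.exp (-(sD * d x y))))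
    (hfix : ∀ j, ∑ x, p x * A x j / Z x = 1) :
    ∀ μ : ℂ, HasEig ((1 - M).map (fun x : ℝ => (x : ℂ))) μ →
      μ.im = 0 ∧ 0 ≤ μ.re ∧ μ.re < 1 :=
  one_sub_M_eigenvalues_general p hp d sD sP g q hq A hA Z hZ M hM hker hfix

end RDP
end
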